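/- arXiv:math/0411655 — 4 statements merged into one kernel-verified Lean document; each statement's English description precedes it below -/
import Mathlib

section
/- Let X_n be a random walk on ℤ satisfying sup_x P(X_n = x) ≤ c/√n for all n ≥ 1 and some constant c. With R_k the number of distinct sites visited by time k and τ_k the first time the range equals k, for any integer D with √D > c one has P(τ_k − τ_{k−1} > n D k²) ≤ (c/√D)^n for all n ≥ 1 and k ≥ 2. -/
open MeasureTheory ProbabilityTheory
open scoped ENNReal

noncomputable section

/-- `walkRange X k ω` is the number of distinct sites visited by the walk `X` up to
time `k`: `R_k = Card({X_0, …, X_k})`. -/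
def walkRange {Ω : Type*} (X : ℕ → Ω → ℤ) (k : ℕ) (ω : Ω) : ℕ :=
  ((Finset.range (k + 1)).image fun i => X i ω).card

/-- `tauRange X k ω` is the first time the range of the walk reaches `k`:
`τ_k = min {n ≥ 1 : R_n = k}` (valued in `ℕ∞`, with `τ₁ = 0` by convention). -/
def tauRange {Ω : Type*} (X : ℕ → Ω → ℤ) (k : ℕ) (ω : Ω) : ℕ∞ :=
  if k ≤ 1 then 0
  else sInf {n : ℕ∞ | ∃ m : ℕ, n = m ∧ 1 ≤ m ∧ walkRange X m ω = k}

namespace Stmt3Aux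

/-! ### Deterministic trajectory combinatorics -/

/-- partial sums of an increment sequence -/
def xi (v : ℕ → ℤ) (m : ℕ) : ℤ := ∑ j ∈ Finset.range m, v j

/-- visited sites up to time t -/
def vis (v : ℕ → ℤ) (t : ℕ) : Finset ℤ := (Finset.range (t + 1)).image (xi v)

/-- number of visited sites -/
def rng (v : ℕ → ℤ) (t : ℕ) : ℕ := (vis v t).card

lemma xi_congr {v w : ℕ → ℤ} {m : ℕ} (h : ∀ i < m, v i = w i) : xi v m = xi w m :=
  Finset.sum_congr rfl fun i hi => h i (Finset.mem_range.mp hi)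

lemma vis_congr {v w : ℕ → ℤ} {t : ℕ} (h : ∀ i < t, v i = w i) : vis v t = vis w t := by
  unfold vis
  apply Finset.image_congr
  intro j hj
  simp only [Finset.coe_range, Set.mem_Iio, Finset.mem_range] at hj
  exact xi_congr fun i hi => h i (lt_of_lt_of_le hi (Nat.lt_succ_iff.mp hj))

lemma rng_congr {v w : ℕ → ℤ} {t : ℕ} (h : ∀ i < t, v i = w i) : rng v t = rng w t := by
  unfold rng; rw [vis_congr h]

lemma vis_mono (v : ℕ → ℤ) {t t' : ℕ} (h : t ≤ t') : vis v t ⊆ vis v t' :=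
  Finset.image_subset_image (Finset.range_subset_range.mpr (by omega))

lemma rng_mono (v : ℕ → ℤ) {t t' : ℕ} (h : t ≤ t') : rng v t ≤ rng v t' :=
  Finset.card_le_card (vis_mono v h)

lemma xi_mem_vis (v : ℕ → ℤ) {m t : ℕ} (h : m ≤ t) : xi v m ∈ vis v t :=
  Finset.mem_image_of_mem _ (Finset.mem_range.mpr (by omega))

lemma rng_zero (v : ℕ → ℤ) : rng v 0 = 1 := by
  simp [rng, vis]

/-- discrete intermediate value theorem -/
lemma ivt {f : ℕ → ℕ} (hstep : ∀ i, f (i + 1) ≤ f i + 1) {K : ℕ} (h0 : f 0 ≤ K) :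
    ∀ m, K ≤ f m → ∃ j ≤ m, f j = K := by
  intro m
  induction m with
  | zero => intro h; exact ⟨0, le_refl _, le_antisymm h0 h⟩
  | succ m ih =>
    intro h
    rcases le_or_gt K (f m) with h' | h'
    · obtain ⟨j, hj, hjK⟩ := ih h'
      exact ⟨j, by omega, hjK⟩
    · exact ⟨m + 1, le_refl _, by have := hstep m; omega⟩

section WR
variable {Ω : Type*} {X : ℕ → Ω → ℤ} {ω : Ω}

lemma walkRange_zero : walkRange X 0 ω = 1 := by simp [walkRange]

lemma walkRange_step (t : ℕ) : walkRange X (t + 1) ω ≤ walkRange X t ω + 1 := by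
  unfold walkRange
  rw [Finset.range_add_one, Finset.image_insert]
  exact Finset.card_insert_le _ _

lemma tau_le {k m : ℕ} (hk : 2 ≤ k) (hR : walkRange X m ω = k) :
    tauRange X k ω ≤ (m : ℕ∞) := by
  have hm : 1 ≤ m := by
    rcases Nat.eq_zero_or_pos m with rfl | h
    · rw [walkRange_zero] at hR; omega
    · exact h
  rw [tauRange, if_neg (by omega)]
  exact sInf_le ⟨m, rfl, hm, hR⟩

lemma tau_coe {k t : ℕ} (hk : 1 ≤ k) (h : tauRange X k ω = (t : ℕ∞)) :
    walkRange X t ω = k ∧ ∀ m < t, walkRange X m ω ≠ k := by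
  rcases eq_or_lt_of_le hk with h1 | h2
  · -- k = 1
    rw [tauRange, if_pos (by omega)] at h
    have ht : t = 0 := by exact_mod_cast h.symm
    subst ht
    exact ⟨by rw [walkRange_zero, ← h1], fun m hm => absurd hm (by omega)⟩
  · -- k ≥ 2
    rw [tauRange, if_neg (by omega)] at h
    set A := {m : ℕ | 1 ≤ m ∧ walkRange X m ω = k} with hA
    have hset : {n : ℕ∞ | ∃ m : ℕ, n = m ∧ 1 ≤ m ∧ walkRange X m ω = k}
        = (fun m : ℕ => (m : ℕ∞)) '' A := by
      ext x; constructor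
      · rintro ⟨m, rfl, hm1, hm2⟩; exact ⟨m, ⟨hm1, hm2⟩, rfl⟩
      · rintro ⟨m, ⟨hm1, hm2⟩, rfl⟩; exact ⟨m, rfl, hm1, hm2⟩
    rw [hset] at h
    have hAne : A.Nonempty := by
      by_contra hne
      rw [Set.not_nonempty_iff_eq_empty] at hne
      rw [hne, Set.image_empty, sInf_empty] at h
      exact (ENat.coe_ne_top t) h.symm
    have hmem := Nat.sInf_mem hAne
    have hval : sInf ((fun m : ℕ => (m : ℕ∞)) '' A) = ((sInf A : ℕ) : ℕ∞) := by
      apply le_antisymm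
      · exact sInf_le ⟨sInf A, hmem, rfl⟩
      · apply le_sInf
        rintro x ⟨m, hm, rfl⟩
        simp only []
        exact_mod_cast Nat.sInf_le hm
    rw [hval] at h
    have ht : t = sInf A := by exact_mod_cast h.symm
    refine ⟨by rw [ht]; exact hmem.2, fun m hm hRm => ?_⟩
    have hm1 : 1 ≤ m := by
      rcases Nat.eq_zero_or_pos m with rfl | hp
      · rw [walkRange_zero] at hRm; omega
      · exact hp
    have := Nat.sInf_le (show m ∈ A from ⟨hm1, hRm⟩)
    omega

end WR

/-! ### Probabilistic lemmas -/

/-- truncation of the increments trajectory to the first `s` coordinates -/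
def trunc {Ω : Type*} (Y : ℕ → Ω → ℤ) (s : ℕ) (ω : Ω) : ℕ → ℤ :=
  fun i => if i < s then Y i ω else 0

variable {Ω : Type*} [MeasurableSpace Ω] {P : Measure Ω} [IsProbabilityMeasure P]
  {p : ℤ → ℝ} {Y : ℕ → Ω → ℤ}

omit [IsProbabilityMeasure P] in
lemma trunc_meas (hYmeas : ∀ n, Measurable (Y n)) (s : ℕ) : Measurable (trunc Y s) := by
  apply measurable_pi_lambda
  intro i
  by_cases h : i < s
  · simpa [trunc, h] using hYmeas i
  · simpa [trunc, h] using measurable_const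

lemma supp_countable (s : ℕ) : Set.Countable {v : ℕ → ℤ | ∀ i, s ≤ i → v i = 0} := by
  have hinj : Function.Injective
      (fun v : {v : ℕ → ℤ // ∀ i, s ≤ i → v i = 0} => (fun i : Fin s => (v : ℕ → ℤ) i)) := by
    rintro ⟨v, hv⟩ ⟨w, hw⟩ h
    simp only [Subtype.mk.injEq]
    ext i
    rcases lt_or_ge i s with hi | hi
    · exact congrFun h ⟨i, hi⟩
    · rw [hv i hi, hw i hi]
  have : Countable {v : ℕ → ℤ // ∀ i, s ≤ i → v i = 0} :=
    (Countable.exists_injective_nat _).elim fun f hf => ⟨f ∘ _, hf.comp hinj⟩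
  exact Set.countable_coe_iff.mp this

omit [IsProbabilityMeasure P] in
lemma cyl_meas (hYmeas : ∀ n, Measurable (Y n)) {s : ℕ} {S : Set (ℕ → ℤ)}
    (hS : ∀ v ∈ S, ∀ i, s ≤ i → v i = 0) : MeasurableSet (trunc Y s ⁻¹' S) := by
  have hSc : S.Countable := (supp_countable s).mono hS
  have : trunc Y s ⁻¹' S = ⋃ v ∈ S, trunc Y s ⁻¹' {v} := by
    ext ω; simp
  rw [this]
  exact MeasurableSet.biUnion hSc fun v _ =>
    (trunc_meas hYmeas s) (measurableSet_singleton v)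

omit [IsProbabilityMeasure P] in
lemma atom_meas (hYindep : iIndepFun Y P)
    (hYlaw : ∀ n z, P {ω | Y n ω = z} = ENNReal.ofReal (p z))
    (s N : ℕ) (v : ℕ → ℤ) :
    P (⋂ i ∈ Finset.range N, {ω | Y (s + i) ω = v i})
      = ∏ i ∈ Finset.range N, ENNReal.ofReal (p (v i)) := by
  have hinj : ∀ a ∈ Finset.range N, ∀ b ∈ Finset.range N, s + a = s + b → a = b := by
    intro a _ b _ h; omega
  have hkey := (iIndepFun_iff_measure_inter_preimage_eq_mul.mp hYindep)
      ((Finset.range N).image (s + ·))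
      (sets := fun j => ({v (j - s)} : Set ℤ)) (fun i _ => trivial)
  have h1 : (⋂ j ∈ (Finset.range N).image (s + ·), Y j ⁻¹' {v (j - s)})
      = ⋂ i ∈ Finset.range N, {ω | Y (s + i) ω = v i} := by
    ext ω
    simp only [Set.mem_iInter, Finset.mem_image, Finset.mem_range, Set.mem_preimage,
      Set.mem_singleton_iff, Set.mem_setOf_eq]
    constructor
    · intro h i hi
      have := h (s + i) ⟨i, hi, rfl⟩
      simpa using this
    · rintro h j ⟨i, hi, rfl⟩
      simpa using h i hi
  have h2 : ∏ j ∈ (Finset.range N).image (s + ·), P (Y j ⁻¹' {v (j - s)})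
      = ∏ i ∈ Finset.range N, ENNReal.ofReal (p (v i)) := by
    rw [Finset.prod_image hinj]
    apply Finset.prod_congr rfl
    intro i _
    have : Y (s + i) ⁻¹' {v (s + i - s)} = {ω | Y (s + i) ω = v i} := by
      ext ω; simp
    rw [this, hYlaw]
  rw [h1] at hkey
  rw [hkey, h2]

omit [IsProbabilityMeasure P] in
lemma blocksum_eq (hYindep : iIndepFun Y P)
    (hYlaw : ∀ n z, P {ω | Y n ω = z} = ENNReal.ofReal (p z))
    (hYmeas : ∀ n, Measurable (Y n)) (s N : ℕ) (x : ℤ) :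
    P {ω | (∑ i ∈ Finset.range N, Y (s + i) ω) = x}
      = P {ω | (∑ i ∈ Finset.range N, Y i ω) = x} := by
  classical
  set T : Set (ℕ → ℤ) := {v | (∀ i, N ≤ i → v i = 0) ∧ ∑ i ∈ Finset.range N, v i = x} with hT
  have hTc : T.Countable := (supp_countable N).mono fun v hv => hv.1
  have key : ∀ s' : ℕ, P {ω | (∑ i ∈ Finset.range N, Y (s' + i) ω) = x}
      = ∑' v : T, ∏ i ∈ Finset.range N, ENNReal.ofReal (p ((v : ℕ → ℤ) i)) := by
    intro s'
    have hunion : {ω | (∑ i ∈ Finset.range N, Y (s' + i) ω) = x}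
        = ⋃ v : T, ⋂ i ∈ Finset.range N, {ω | Y (s' + i) ω = (v : ℕ → ℤ) i} := by
      ext ω
      simp only [Set.mem_setOf_eq, Set.mem_iUnion, Set.mem_iInter, Finset.mem_range]
      constructor
      · intro h
        refine ⟨⟨fun i => if i < N then Y (s' + i) ω else 0, ?_, ?_⟩, ?_⟩
        · intro i hi; simp [Nat.not_lt.mpr hi]
        · rw [← h]; apply Finset.sum_congr rfl; intro i hi
          simp [Finset.mem_range.mp hi]
        · intro i hi; simp [hi]
      · rintro ⟨⟨v, hv0, hvs⟩, hmatch⟩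
        rw [← hvs]
        apply Finset.sum_congr rfl
        intro i hi
        exact hmatch i (Finset.mem_range.mp hi)
    have hdisj : Pairwise (Function.onFun Disjoint
        fun v : T => ⋂ i ∈ Finset.range N, {ω | Y (s' + i) ω = (v : ℕ → ℤ) i}) := by
      rintro ⟨v, hv⟩ ⟨w, hw⟩ hne
      have : ∃ i < N, v i ≠ w i := by
        by_contra hall
        push_neg at hall
        apply hne
        simp only [Subtype.mk.injEq]
        ext i
        rcases lt_or_ge i N with hi | hi
        · exact hall i hi
        · rw [hv.1 i hi, hw.1 i hi]
      obtain ⟨i, hiN, hivw⟩ := this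
      apply Set.disjoint_left.mpr
      intro ω hω1 hω2
      simp only [Set.mem_iInter, Finset.mem_range, Set.mem_setOf_eq] at hω1 hω2
      exact hivw ((hω1 i hiN).symm.trans (hω2 i hiN))
    have hmeas : ∀ v : T, MeasurableSet
        (⋂ i ∈ Finset.range N, {ω | Y (s' + i) ω = (v : ℕ → ℤ) i}) := by
      intro v
      apply MeasurableSet.biInter (Set.to_countable _)
      intro i _
      exact (hYmeas (s' + i)) (measurableSet_singleton _)
    have := hTc.to_subtype
    rw [hunion, measure_iUnion hdisj hmeas]
    congr 1
    funext v
    exact atom_meas hYindep hYlaw s' N v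
  have h0 := key 0
  simp only [Nat.zero_add] at h0
  rw [key s, h0]

omit [IsProbabilityMeasure P] in
lemma indep_trunc_blocksum (hYmeas : ∀ n, Measurable (Y n))
    (hYindep : iIndepFun Y P) (s N : ℕ) :
    IndepFun (trunc Y s) (fun ω => ∑ i ∈ Finset.range N, Y (s + i) ω) P := by
  have hdisj : Disjoint (Finset.range s) (Finset.Ico s (s + N)) := by
    rw [Finset.disjoint_left]
    intro a ha hb
    rw [Finset.mem_range] at ha
    rw [Finset.mem_Ico] at hb
    omega
  have hI := hYindep.indepFun_finset (Finset.range s) (Finset.Ico s (s + N)) hdisj hYmeas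
  set φ : ((i : (Finset.range s : Finset ℕ)) → ℤ) → (ℕ → ℤ) :=
    fun f i => if h : i < s then f ⟨i, Finset.mem_range.mpr h⟩ else 0 with hφdef
  set ψ : ((i : (Finset.Ico s (s + N) : Finset ℕ)) → ℤ) → ℤ :=
    fun f => ∑ i ∈ (Finset.range N).attach,
      f ⟨s + i.1, Finset.mem_Ico.mpr ⟨Nat.le_add_right _ _,
        by have := Finset.mem_range.mp i.2; omega⟩⟩ with hψdef
  have hφ : Measurable φ := by
    apply measurable_pi_lambda
    intro i
    by_cases h : i < s
    · simpa [hφdef, h] using measurable_pi_apply _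
    · simpa [hφdef, h] using measurable_const
  have hψ : Measurable ψ := by
    apply Finset.measurable_sum
    intro i _
    exact measurable_pi_apply _
  have hc1 : trunc Y s = φ ∘ (fun ω (i : (Finset.range s : Finset ℕ)) => Y i ω) := by
    funext ω i
    by_cases h : i < s <;> simp [trunc, hφdef, Function.comp, h]
  have hc2 : (fun ω => ∑ i ∈ Finset.range N, Y (s + i) ω)
      = ψ ∘ (fun ω (i : (Finset.Ico s (s + N) : Finset ℕ)) => Y i ω) := by
    funext ω
    simp only [Function.comp, hψdef]
    rw [← Finset.sum_attach (Finset.range N) (fun i => Y (s + i) ω)]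
  rw [hc1, hc2]
  exact hI.comp hφ hψ

omit [IsProbabilityMeasure P] in
lemma core (hYmeas : ∀ n, Measurable (Y n))
    (hYindep : iIndepFun Y P)
    (s N : ℕ) {S : Set (ℕ → ℤ)} (hS : ∀ v ∈ S, ∀ i, s ≤ i → v i = 0)
    (G : (ℕ → ℤ) → Set ℤ) {b : ℝ≥0∞}
    (hb : ∀ v ∈ S, P {ω | (∑ i ∈ Finset.range N, Y (s + i) ω) ∈ G v} ≤ b) :
    P {ω | trunc Y s ω ∈ S ∧ (∑ i ∈ Finset.range N, Y (s + i) ω) ∈ G (trunc Y s ω)}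
      ≤ b * P (trunc Y s ⁻¹' S) := by
  classical
  have hSc : S.Countable := (supp_countable s).mono hS
  have := hSc.to_subtype
  have hIndep := indep_trunc_blocksum hYmeas hYindep (P := P) s N
  set Z : Ω → ℤ := fun ω => ∑ i ∈ Finset.range N, Y (s + i) ω with hZ
  have hunion : {ω | trunc Y s ω ∈ S ∧ Z ω ∈ G (trunc Y s ω)}
      = ⋃ v : S, (trunc Y s ⁻¹' {(v : ℕ → ℤ)} ∩ Z ⁻¹' (G v)) := by
    ext ω
    simp only [Set.mem_setOf_eq, Set.mem_iUnion, Set.mem_inter_iff, Set.mem_preimage,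
      Set.mem_singleton_iff]
    constructor
    · rintro ⟨h1, h2⟩; exact ⟨⟨trunc Y s ω, h1⟩, rfl, h2⟩
    · rintro ⟨v, hv, h2⟩; rw [hv]; exact ⟨v.2, h2⟩
  calc P {ω | trunc Y s ω ∈ S ∧ Z ω ∈ G (trunc Y s ω)}
      ≤ ∑' v : S, P (trunc Y s ⁻¹' {(v : ℕ → ℤ)} ∩ Z ⁻¹' (G v)) := by
        rw [hunion]; exact measure_iUnion_le _
    _ = ∑' v : S, P (trunc Y s ⁻¹' {(v : ℕ → ℤ)}) * P (Z ⁻¹' (G v)) := by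
        congr 1; funext v
        exact hIndep.measure_inter_preimage_eq_mul _ _ (measurableSet_singleton _) trivial
    _ ≤ ∑' v : S, P (trunc Y s ⁻¹' {(v : ℕ → ℤ)}) * b := by
        apply ENNReal.tsum_le_tsum
        intro v
        apply mul_le_mul_right
        have : Z ⁻¹' (G v) = {ω | Z ω ∈ G (v : ℕ → ℤ)} := rfl
        rw [this]
        exact hb v v.2
    _ = (∑' v : S, P (trunc Y s ⁻¹' {(v : ℕ → ℤ)})) * b := ENNReal.tsum_mul_right
    _ = P (trunc Y s ⁻¹' S) * b := by
        congr 1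
        have hu : (⋃ v : S, trunc Y s ⁻¹' {(v : ℕ → ℤ)}) = trunc Y s ⁻¹' S := by
          ext ω
          simp only [Set.mem_iUnion, Set.mem_preimage, Set.mem_singleton_iff]
          constructor
          · rintro ⟨v, hv⟩; rw [hv]; exact v.2
          · intro h; exact ⟨⟨_, h⟩, rfl⟩
        rw [← hu]
        refine (measure_iUnion ?_ ?_).symm
        · rintro ⟨v, hv⟩ ⟨w, hw⟩ hne
          apply Set.disjoint_left.mpr
          intro ω h1 h2
          simp only [Set.mem_preimage, Set.mem_singleton_iff] at h1 h2
          exact hne (by simp only [Subtype.mk.injEq]; rw [← h1, ← h2])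
        · intro v
          exact trunc_meas hYmeas s (measurableSet_singleton _)
    _ = b * P (trunc Y s ⁻¹' S) := mul_comm _ _

/-- The cylinder set recording: the walk has fresh range `κ` first at time `t`,
and at each of the times `t + i·N` (for `1 ≤ i ≤ j`) it lies in the set of
sites visited by time `t`. -/
def SS (κ N t j : ℕ) : Set (ℕ → ℤ) :=
  {v | (∀ i, t + j * N ≤ i → v i = 0) ∧
       (rng v t = κ ∧ ∀ m < t, rng v m ≠ κ) ∧
       (∀ i, 1 ≤ i → i ≤ j → xi v (t + i * N) ∈ vis v t)}

end Stmt3Aux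

/-- (Bound (35)) For a random walk on `ℤ` with `sup_x P(X_n = x) ≤ c/√n` and any
integer `D` with `√D > c`: `P(τ_k − τ_{k−1} > n D k²) ≤ (c/√D)^n` for `n ≥ 1`,
`k ≥ 2`. -/
theorem stmt_3 {Ω : Type*} [MeasurableSpace Ω] (P : Measure Ω) [IsProbabilityMeasure P]
    (p : ℤ → ℝ) (hp0 : ∀ z, 0 ≤ p z) (hp1 : ∑' z : ℤ, p z = 1)
    (Y : ℕ → Ω → ℤ) (hYmeas : ∀ n, Measurable (Y n))
    (hYindep : iIndepFun Y P)
    (hYlaw : ∀ n z, P {ω | Y n ω = z} = ENNReal.ofReal (p z))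
    (X : ℕ → Ω → ℤ) (hX : ∀ n ω, X n ω = ∑ i ∈ Finset.range n, Y i ω)
    (c : ℝ) (hc : 0 < c)
    (hloc : ∀ n : ℕ, 1 ≤ n → ∀ x : ℤ,
      P {ω | X n ω = x} ≤ ENNReal.ofReal (c / Real.sqrt n))
    (D : ℕ) (hD : c < Real.sqrt D) :
    ∀ n k : ℕ, 1 ≤ n → 2 ≤ k →
      P {ω | ((n * D * k ^ 2 : ℕ) : ℕ∞) < tauRange X k ω - tauRange X (k - 1) ω} ≤
        ENNReal.ofReal ((c / Real.sqrt D) ^ n) := by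
  intro n k hn hk
  classical
  set κ := k - 1 with hκdef
  have hκ1 : 1 ≤ κ := by omega
  have hkκ : k = κ + 1 := by omega
  have hD0 : (0 : ℝ) < Real.sqrt D := lt_trans hc hD
  have hD1 : 1 ≤ D := by
    by_contra h
    have hD00 : D = 0 := by omega
    rw [hD00] at hD
    simp only [Nat.cast_zero, Real.sqrt_zero] at hD
    exact absurd hD (not_lt.mpr hc.le)
  set N := D * k ^ 2 with hNdef
  have hN1 : 1 ≤ N := by
    have h1 : 1 ≤ k ^ 2 := by nlinarith
    calc 1 = 1 * 1 := by ring
      _ ≤ D * k ^ 2 := Nat.mul_le_mul hD1 h1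
  set W : Ω → ℕ → ℤ := fun ω i => Y i ω with hW
  have hfun : ∀ ω, (fun i => X i ω) = Stmt3Aux.xi (W ω) := by
    intro ω; funext m; rw [hX]; rfl
  have hwalk : ∀ t (ω : Ω), walkRange X t ω = Stmt3Aux.rng (W ω) t := by
    intro t ω
    unfold walkRange Stmt3Aux.rng Stmt3Aux.vis
    rw [hfun ω]
  -- pointwise description of the cylinder sets
  have claim : ∀ t j (ω : Ω), Stmt3Aux.trunc Y (t + j * N) ω ∈ Stmt3Aux.SS κ N t j ↔
      ((Stmt3Aux.rng (W ω) t = κ ∧ ∀ m < t, Stmt3Aux.rng (W ω) m ≠ κ) ∧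
       (∀ i, 1 ≤ i → i ≤ j → Stmt3Aux.xi (W ω) (t + i * N) ∈ Stmt3Aux.vis (W ω) t)) := by
    intro t j ω
    have agree : ∀ i, i < t + j * N → Stmt3Aux.trunc Y (t + j * N) ω i = W ω i :=
      fun i hi => if_pos hi
    have h1 : ∀ m, m ≤ t →
        Stmt3Aux.rng (Stmt3Aux.trunc Y (t + j * N) ω) m = Stmt3Aux.rng (W ω) m :=
      fun m hm => Stmt3Aux.rng_congr fun i hi => agree i (by omega)
    have h2 : Stmt3Aux.vis (Stmt3Aux.trunc Y (t + j * N) ω) t = Stmt3Aux.vis (W ω) t :=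
      Stmt3Aux.vis_congr fun i hi => agree i (by omega)
    have h3 : ∀ i, i ≤ j → Stmt3Aux.xi (Stmt3Aux.trunc Y (t + j * N) ω) (t + i * N)
        = Stmt3Aux.xi (W ω) (t + i * N) := by
      intro i hij
      apply Stmt3Aux.xi_congr
      intro l hl
      have : i * N ≤ j * N := Nat.mul_le_mul_right N hij
      exact agree l (by omega)
    simp only [Stmt3Aux.SS, Set.mem_setOf_eq]
    constructor
    · rintro ⟨-, ⟨hr, hmin⟩, hvisit⟩
      refine ⟨⟨?_, ?_⟩, ?_⟩
      · rw [← h1 t le_rfl]; exact hr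
      · intro m hm; rw [← h1 m (by omega)]; exact hmin m hm
      · intro i hi1 hij
        have := hvisit i hi1 hij
        rwa [h3 i hij, h2] at this
    · rintro ⟨⟨hr, hmin⟩, hvisit⟩
      refine ⟨?_, ⟨?_, ?_⟩, ?_⟩
      · intro i hi; exact if_neg (by omega)
      · rw [h1 t le_rfl]; exact hr
      · intro m hm; rw [h1 m (by omega)]; exact hmin m hm
      · intro i hi1 hij
        rw [h3 i hij, h2]; exact hvisit i hi1 hij
  have hSSsupp : ∀ t j, ∀ v ∈ Stmt3Aux.SS κ N t j, ∀ i, t + j * N ≤ i → v i = 0 :=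
    fun t j v hv => hv.1
  -- the one-block probability bound
  have hsqrtN : Real.sqrt (N : ℝ) = Real.sqrt D * k := by
    have hNr : ((N : ℕ) : ℝ) = (D : ℝ) * (k : ℝ) ^ 2 := by
      rw [hNdef]; push_cast; ring
    rw [hNr, Real.sqrt_mul (by positivity), Real.sqrt_sq (by positivity)]
  have hptbound : ∀ (s : ℕ) (x : ℤ),
      P {ω | (∑ i ∈ Finset.range N, Y (s + i) ω) = x} ≤ ENNReal.ofReal (c / Real.sqrt N) := by
    intro s x
    rw [Stmt3Aux.blocksum_eq hYindep hYlaw hYmeas s N x]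
    have hXset : {ω | (∑ i ∈ Finset.range N, Y i ω) = x} = {ω | X N ω = x} := by
      ext ω; rw [Set.mem_setOf_eq, Set.mem_setOf_eq, hX]
    rw [hXset]
    exact hloc N hN1 x
  have hκbound : (κ : ℝ) * (c / Real.sqrt N) ≤ c / Real.sqrt D := by
    rw [hsqrtN]
    have hk0 : (0 : ℝ) < k := by
      have : 0 < k := by omega
      exact_mod_cast this
    have hκk : (κ : ℝ) ≤ k := by exact_mod_cast (show κ ≤ k by omega)
    have heq : (κ : ℝ) * (c / (Real.sqrt D * k)) = ((κ : ℝ) / k) * (c / Real.sqrt D) := by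
      field_simp
    rw [heq]
    calc ((κ : ℝ) / k) * (c / Real.sqrt D) ≤ 1 * (c / Real.sqrt D) := by
          apply mul_le_mul_of_nonneg_right _ (div_nonneg hc.le hD0.le)
          rw [div_le_one hk0]; exact hκk
      _ = c / Real.sqrt D := one_mul _
  set b := ENNReal.ofReal (c / Real.sqrt D) with hbdef
  -- one conditioning step
  have hstep : ∀ t j, P (Stmt3Aux.trunc Y (t + (j + 1) * N) ⁻¹' Stmt3Aux.SS κ N t (j + 1))
      ≤ b * P (Stmt3Aux.trunc Y (t + j * N) ⁻¹' Stmt3Aux.SS κ N t j) := by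
    intro t j
    set G : (ℕ → ℤ) → Set ℤ :=
      fun v => {z | Stmt3Aux.xi v (t + j * N) + z ∈ Stmt3Aux.vis v t} with hG
    have hseteq : Stmt3Aux.trunc Y (t + (j + 1) * N) ⁻¹' Stmt3Aux.SS κ N t (j + 1)
        = {ω | Stmt3Aux.trunc Y (t + j * N) ω ∈ Stmt3Aux.SS κ N t j ∧
            (∑ i ∈ Finset.range N, Y ((t + j * N) + i) ω) ∈ G (Stmt3Aux.trunc Y (t + j * N) ω)} := by
      ext ω
      rw [Set.mem_preimage, claim t (j + 1) ω, Set.mem_setOf_eq, claim t j ω]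
      have agree : ∀ i, i < t + j * N → Stmt3Aux.trunc Y (t + j * N) ω i = W ω i :=
        fun i hi => if_pos hi
      have hxis : Stmt3Aux.xi (Stmt3Aux.trunc Y (t + j * N) ω) (t + j * N)
          = Stmt3Aux.xi (W ω) (t + j * N) :=
        Stmt3Aux.xi_congr fun i hi => agree i hi
      have hvist : Stmt3Aux.vis (Stmt3Aux.trunc Y (t + j * N) ω) t = Stmt3Aux.vis (W ω) t :=
        Stmt3Aux.vis_congr fun i hi => agree i (by omega)
      have hsum : Stmt3Aux.xi (W ω) (t + j * N) + (∑ i ∈ Finset.range N, Y ((t + j * N) + i) ω)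
          = Stmt3Aux.xi (W ω) (t + (j + 1) * N) := by
        have hidx : t + (j + 1) * N = (t + j * N) + N := by ring
        rw [hidx]
        unfold Stmt3Aux.xi
        conv_rhs => rw [Finset.sum_range_add]
      have hGmem : (∑ i ∈ Finset.range N, Y ((t + j * N) + i) ω)
          ∈ G (Stmt3Aux.trunc Y (t + j * N) ω)
          ↔ Stmt3Aux.xi (W ω) (t + (j + 1) * N) ∈ Stmt3Aux.vis (W ω) t := by
        simp only [hG, Set.mem_setOf_eq]
        rw [hxis, hvist, hsum]
      rw [hGmem]
      constructor
      · rintro ⟨hQ, hvisit⟩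
        exact ⟨⟨hQ, fun i h1 h2 => hvisit i h1 (by omega)⟩, hvisit (j + 1) (by omega) le_rfl⟩
      · rintro ⟨⟨hQ, hvisit⟩, hnew⟩
        refine ⟨hQ, fun i h1 h2 => ?_⟩
        rcases Nat.lt_or_ge i (j + 1) with hlt | hge
        · exact hvisit i h1 (by omega)
        · have hi : i = j + 1 := by omega
          rw [hi]; exact hnew
    rw [hseteq]
    apply Stmt3Aux.core hYmeas hYindep (t + j * N) N (hSSsupp t j) G
    -- block bound
    intro v hv
    set F : Finset ℤ := (Stmt3Aux.vis v t).image (fun w => w - Stmt3Aux.xi v (t + j * N))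
      with hF
    have hGF : G v = ↑F := by
      ext z
      simp only [hG, Set.mem_setOf_eq, hF, Finset.coe_image, Set.mem_image, Finset.mem_coe]
      constructor
      · intro h; exact ⟨_, h, by ring⟩
      · rintro ⟨w, hw, rfl⟩
        have hzz : Stmt3Aux.xi v (t + j * N) + (w - Stmt3Aux.xi v (t + j * N)) = w := by ring
        rw [hzz]; exact hw
    have hcard : F.card ≤ κ := by
      refine le_trans Finset.card_image_le ?_
      exact le_of_eq hv.2.1.1
    calc P {ω | (∑ i ∈ Finset.range N, Y ((t + j * N) + i) ω) ∈ G v}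
        = P (⋃ z ∈ F, {ω | (∑ i ∈ Finset.range N, Y ((t + j * N) + i) ω) = z}) := by
          congr 1; ext ω
          simp only [Set.mem_setOf_eq, Set.mem_iUnion, hGF, Finset.mem_coe]
          constructor
          · intro h; exact ⟨_, h, rfl⟩
          · rintro ⟨z, hz, h⟩; rw [h]; exact hz
      _ ≤ ∑ z ∈ F, P {ω | (∑ i ∈ Finset.range N, Y ((t + j * N) + i) ω) = z} :=
          measure_biUnion_finset_le _ _
      _ ≤ F.card • ENNReal.ofReal (c / Real.sqrt N) :=
          Finset.sum_le_card_nsmul _ _ _ (fun z _ => hptbound _ z)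
      _ = (F.card : ℝ≥0∞) * ENNReal.ofReal (c / Real.sqrt N) := nsmul_eq_mul _ _
      _ ≤ (κ : ℝ≥0∞) * ENNReal.ofReal (c / Real.sqrt N) := by
          apply mul_le_mul_left
          exact_mod_cast hcard
      _ = ENNReal.ofReal ((κ : ℝ) * (c / Real.sqrt N)) := by
          rw [ENNReal.ofReal_mul (by positivity), ENNReal.ofReal_natCast]
      _ ≤ b := ENNReal.ofReal_le_ofReal hκbound
  -- iterate the conditioning step
  have hiter : ∀ t j, P (Stmt3Aux.trunc Y (t + j * N) ⁻¹' Stmt3Aux.SS κ N t j)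
      ≤ b ^ j * P (Stmt3Aux.trunc Y (t + 0 * N) ⁻¹' Stmt3Aux.SS κ N t 0) := by
    intro t j
    induction j with
    | zero => simp
    | succ j ih =>
      calc P (Stmt3Aux.trunc Y (t + (j + 1) * N) ⁻¹' Stmt3Aux.SS κ N t (j + 1))
          ≤ b * P (Stmt3Aux.trunc Y (t + j * N) ⁻¹' Stmt3Aux.SS κ N t j) := hstep t j
        _ ≤ b * (b ^ j * P (Stmt3Aux.trunc Y (t + 0 * N) ⁻¹' Stmt3Aux.SS κ N t 0)) :=
            mul_le_mul_right ih _
        _ = b ^ (j + 1) * P (Stmt3Aux.trunc Y (t + 0 * N) ⁻¹' Stmt3Aux.SS κ N t 0) := by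
            rw [← mul_assoc, ← pow_succ']
  -- the base events are disjoint and measurable
  have hQmeas : ∀ t, MeasurableSet (Stmt3Aux.trunc Y (t + 0 * N) ⁻¹' Stmt3Aux.SS κ N t 0) :=
    fun t => Stmt3Aux.cyl_meas hYmeas (hSSsupp t 0)
  have hQdisj : Pairwise (Function.onFun Disjoint
      fun t => Stmt3Aux.trunc Y (t + 0 * N) ⁻¹' Stmt3Aux.SS κ N t 0) := by
    intro t t' hne
    apply Set.disjoint_left.mpr
    intro ω h1 h2
    rw [Set.mem_preimage] at h1 h2
    rw [claim t 0 ω] at h1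
    rw [claim t' 0 ω] at h2
    rcases Nat.lt_or_ge t t' with h | h
    · exact h2.1.2 t h h1.1.1
    · exact h1.1.2 t' (by omega) h2.1.1
  have hQsum : ∑' t : ℕ, P (Stmt3Aux.trunc Y (t + 0 * N) ⁻¹' Stmt3Aux.SS κ N t 0) ≤ 1 := by
    rw [← measure_iUnion hQdisj hQmeas]
    exact prob_le_one
  -- inclusion of the event into the union of cylinder events
  have hincl : {ω | ((n * D * k ^ 2 : ℕ) : ℕ∞) < tauRange X k ω - tauRange X κ ω}
      ⊆ ⋃ t : ℕ, Stmt3Aux.trunc Y (t + n * N) ⁻¹' Stmt3Aux.SS κ N t n := by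
    intro ω hω
    rw [Set.mem_setOf_eq] at hω
    have hτne : tauRange X κ ω ≠ ⊤ := by
      intro htop
      rw [htop, ENat.sub_top] at hω
      exact absurd hω (by simp)
    obtain ⟨t, hτ⟩ : ∃ t : ℕ, tauRange X κ ω = (t : ℕ∞) := by
      obtain ⟨t, ht⟩ := WithTop.ne_top_iff_exists.mp hτne
      exact ⟨t, ht.symm⟩
    have hQ := Stmt3Aux.tau_coe hκ1 hτ
    have hbig : ∀ m, m ≤ t + n * N → walkRange X m ω < k := by
      intro m hm
      by_contra hge
      push_neg at hge
      obtain ⟨j, hjm, hj⟩ := Stmt3Aux.ivt (f := fun i => walkRange X i ω)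
        (fun i => Stmt3Aux.walkRange_step i)
        (by show walkRange X 0 ω ≤ k; rw [Stmt3Aux.walkRange_zero]; omega) m hge
      have hle : tauRange X k ω ≤ ((t + n * N : ℕ) : ℕ∞) := by
        refine le_trans (Stmt3Aux.tau_le (by omega) hj) ?_
        exact_mod_cast (show j ≤ t + n * N by omega)
      have hsub : tauRange X k ω - tauRange X κ ω ≤ ((n * N : ℕ) : ℕ∞) := by
        rw [hτ]
        calc tauRange X k ω - (t : ℕ∞)
            ≤ ((t + n * N : ℕ) : ℕ∞) - (t : ℕ∞) := tsub_le_tsub_right hle _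
          _ = ((n * N : ℕ) : ℕ∞) := by
              rw [← ENat.coe_sub]
              norm_cast
              omega
      have hENN : ((n * D * k ^ 2 : ℕ) : ℕ∞) = ((n * N : ℕ) : ℕ∞) := by
        rw [hNdef]
        norm_cast
        ring
      rw [hENN] at hω
      exact absurd (lt_of_lt_of_le hω hsub) (lt_irrefl _)
    refine Set.mem_iUnion.mpr ⟨t, ?_⟩
    rw [Set.mem_preimage, claim t n ω]
    refine ⟨⟨?_, ?_⟩, ?_⟩
    · rw [← hwalk]; exact hQ.1
    · intro m hm; rw [← hwalk]; exact hQ.2 m hm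
    · intro i hi1 hin
      have hmle : t + i * N ≤ t + n * N := by
        have := Nat.mul_le_mul_right N hin; omega
      have hlt : walkRange X (t + i * N) ω < k := hbig _ hmle
      have h0 : Stmt3Aux.rng (W ω) t = κ := by rw [← hwalk]; exact hQ.1
      have hgeκ : κ ≤ Stmt3Aux.rng (W ω) (t + i * N) := by
        rw [← h0]
        exact Stmt3Aux.rng_mono _ (by omega)
      have heq : Stmt3Aux.rng (W ω) (t + i * N) = κ := by
        have := hwalk (t + i * N) ω
        omega
      have hviseq : Stmt3Aux.vis (W ω) t = Stmt3Aux.vis (W ω) (t + i * N) := by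
        apply Finset.eq_of_subset_of_card_le (Stmt3Aux.vis_mono _ (by omega))
        show Stmt3Aux.rng (W ω) (t + i * N) ≤ Stmt3Aux.rng (W ω) t
        rw [heq, h0]
      rw [hviseq]
      exact Stmt3Aux.xi_mem_vis _ le_rfl
  -- conclusion
  calc P {ω | ((n * D * k ^ 2 : ℕ) : ℕ∞) < tauRange X k ω - tauRange X κ ω}
      ≤ P (⋃ t : ℕ, Stmt3Aux.trunc Y (t + n * N) ⁻¹' Stmt3Aux.SS κ N t n) :=
        measure_mono hincl
    _ ≤ ∑' t : ℕ, P (Stmt3Aux.trunc Y (t + n * N) ⁻¹' Stmt3Aux.SS κ N t n) :=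
        measure_iUnion_le _
    _ ≤ ∑' t : ℕ, b ^ n * P (Stmt3Aux.trunc Y (t + 0 * N) ⁻¹' Stmt3Aux.SS κ N t 0) :=
        ENNReal.tsum_le_tsum (fun t => hiter t n)
    _ = b ^ n * ∑' t : ℕ, P (Stmt3Aux.trunc Y (t + 0 * N) ⁻¹' Stmt3Aux.SS κ N t 0) :=
        ENNReal.tsum_mul_left
    _ ≤ b ^ n * 1 := mul_le_mul_right hQsum _
    _ = b ^ n := mul_one _
    _ = ENNReal.ofReal ((c / Real.sqrt D) ^ n) :=
        (ENNReal.ofReal_pow (div_nonneg hc.le (Real.sqrt_nonneg _)) n).symm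

end
end

section
/- Let X_n be a random walk on ℤ for which there exists c > 0 with P(R_k < k^{1/4}) ≤ c k^{-1/4} for all k, where R_k is the number of distinct sites visited by time k. Then, using the subdivision of [0,k] into blocks of length ⌈k^{1/2}⌉, one has P(R_k < k^{1/8}) ≤ (c k^{-1/8})^{⌈k^{1/2}⌉ − 2} for all k. -/
open MeasureTheory ProbabilityTheory
open scoped ENNReal

noncomputable section

/-- The vector of increments in the `j`-th block of length `M`. -/
def blockVec {Ω : Type*} (Y : ℕ → Ω → ℤ) (M j : ℕ) (ω : Ω) : Fin M → ℤ :=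
  fun i => Y (j * M + i) ω

/-- The number of distinct partial sums of a vector of `M` increments. -/
def sumCard (M : ℕ) (v : Fin M → ℤ) : ℕ :=
  ((Finset.range (M + 1)).image fun i =>
    ∑ t ∈ Finset.range i, (if h : t < M then v ⟨t, h⟩ else 0)).card

lemma blockVec_measurable {Ω : Type*} [MeasurableSpace Ω] (Y : ℕ → Ω → ℤ)
    (hYmeas : ∀ n, Measurable (Y n)) (M j : ℕ) : Measurable (blockVec Y M j) :=
  measurable_pi_lambda _ fun _ => hYmeas _

/-- The number of distinct sites visited during the `j`-th block is a function of the
increments of that block only. -/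
lemma blockCard_eq {Ω : Type*} (Y : ℕ → Ω → ℤ) (X : ℕ → Ω → ℤ)
    (hX : ∀ n ω, X n ω = ∑ i ∈ Finset.range n, Y i ω) (M j : ℕ) (ω : Ω) :
    sumCard M (blockVec Y M j ω) =
      ((Finset.range (M + 1)).image fun i => X (j * M + i) ω).card := by
  classical
  set F : ℕ → ℤ :=
    fun i => ∑ t ∈ Finset.range i, (if h : t < M then blockVec Y M j ω ⟨t, h⟩ else 0) with hF
  have h1 : ∀ i ∈ Finset.range (M + 1), X (j * M + i) ω = X (j * M) ω + F i := by
    intro i hi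
    have hiM : i ≤ M := Nat.lt_succ_iff.1 (Finset.mem_range.1 hi)
    rw [hX, hX, Finset.sum_range_add, hF]
    congr 1
    refine Finset.sum_congr rfl fun t ht => ?_
    have htM : t < M := lt_of_lt_of_le (Finset.mem_range.1 ht) hiM
    rw [dif_pos htM]
    rfl
  have h2 : ((Finset.range (M + 1)).image fun i => X (j * M + i) ω) =
      ((Finset.range (M + 1)).image F).image (fun z => X (j * M) ω + z) := by
    rw [Finset.image_image]
    exact Finset.image_congr fun i hi => h1 i hi
  rw [sumCard, h2, Finset.card_image_of_injective _ (add_right_injective _)]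

/-- Under i.i.d. increments, the law of each block increment vector is the same. -/
lemma blockVec_map {Ω : Type*} [MeasurableSpace Ω] (P : Measure Ω)
    (p : ℤ → ℝ) (Y : ℕ → Ω → ℤ) (hYmeas : ∀ n, Measurable (Y n))
    (hYindep : iIndepFun Y P)
    (hYlaw : ∀ n z, P {ω | Y n ω = z} = ENNReal.ofReal (p z))
    (M j : ℕ) :
    Measure.map (blockVec Y M j) P = Measure.map (blockVec Y M 0) P := by
  classical
  have key : ∀ (j : ℕ) (v : Fin M → ℤ), P (blockVec Y M j ⁻¹' {v}) =
      ∏ i ∈ Finset.range M, ENNReal.ofReal (p (if h : i < M then v ⟨i, h⟩ else 0)) := by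
    intro j v
    set s : ℕ → Set Ω := fun n =>
      if h : n - j * M < M then {ω | Y n ω = v ⟨n - j * M, h⟩} else Set.univ with hs_def
    have hsn : ∀ (i : ℕ) (hiM : i < M),
        s (j * M + i) = {ω | Y (j * M + i) ω = v ⟨i, hiM⟩} := by
      intro i hiM
      have hlt : j * M + i - j * M < M := by omega
      have hfin : (⟨j * M + i - j * M, hlt⟩ : Fin M) = ⟨i, hiM⟩ := Fin.mk_eq_mk.2 (by omega)
      rw [hs_def]
      simp only [dif_pos hlt, hfin]
    have hmeas : ∀ n ∈ (Finset.range M).image (fun i => j * M + i),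
        MeasurableSet[(inferInstance : MeasurableSpace ℤ).comap (Y n)] (s n) := by
      intro n hn
      obtain ⟨i, hi, rfl⟩ := Finset.mem_image.1 hn
      rw [hsn i (Finset.mem_range.1 hi)]
      exact ⟨{v ⟨i, Finset.mem_range.1 hi⟩}, measurableSet_singleton _, rfl⟩
    have hbi := hYindep.meas_biInter (S := (Finset.range M).image (fun i => j * M + i))
      (s := s) hmeas
    have hinter : (⋂ n ∈ (Finset.range M).image (fun i => j * M + i), s n)
        = blockVec Y M j ⁻¹' {v} := by
      ext ω
      simp only [Set.mem_iInter, Set.mem_preimage, Set.mem_singleton_iff]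
      constructor
      · intro h
        funext i
        have hi := h (j * M + i) (Finset.mem_image.2 ⟨i, Finset.mem_range.2 i.2, rfl⟩)
        rw [hsn i i.2] at hi
        simpa [blockVec] using hi
      · intro h n hn
        obtain ⟨i, hi, rfl⟩ := Finset.mem_image.1 hn
        rw [hsn i (Finset.mem_range.1 hi)]
        have h2 : blockVec Y M j ω ⟨i, Finset.mem_range.1 hi⟩ = v ⟨i, Finset.mem_range.1 hi⟩ := by
          rw [h]
        simpa [blockVec] using h2
    have hinj : ∀ i ∈ Finset.range M, ∀ i' ∈ Finset.range M,
        j * M + i = j * M + i' → i = i' := by intro i _ i' _ h; omega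
    rw [hinter] at hbi
    rw [hbi, Finset.prod_image hinj]
    refine Finset.prod_congr rfl fun i hi => ?_
    have hiM : i < M := Finset.mem_range.1 hi
    rw [hsn i hiM, hYlaw, dif_pos hiM]
  refine MeasureTheory.Measure.ext_of_singleton fun v => ?_
  rw [Measure.map_apply (blockVec_measurable Y hYmeas M j) (measurableSet_singleton v),
    Measure.map_apply (blockVec_measurable Y hYmeas M 0) (measurableSet_singleton v),
    key j v, key 0 v]

/-- All blocks have the same probability of any event. -/
lemma blockVec_prob_eq {Ω : Type*} [MeasurableSpace Ω] (P : Measure Ω)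
    (p : ℤ → ℝ) (Y : ℕ → Ω → ℤ) (hYmeas : ∀ n, Measurable (Y n))
    (hYindep : iIndepFun Y P)
    (hYlaw : ∀ n z, P {ω | Y n ω = z} = ENNReal.ofReal (p z))
    (M j : ℕ) (S : Set (Fin M → ℤ)) :
    P (blockVec Y M j ⁻¹' S) = P (blockVec Y M 0 ⁻¹' S) := by
  rw [← Measure.map_apply (blockVec_measurable Y hYmeas M j) (MeasurableSet.of_discrete (s := S)),
    blockVec_map P p Y hYmeas hYindep hYlaw M j,
    Measure.map_apply (blockVec_measurable Y hYmeas M 0) (MeasurableSet.of_discrete (s := S))]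

/-- Independence of a block event from the earlier blocks. -/
lemma blockVec_indep_step {Ω : Type*} [MeasurableSpace Ω] (P : Measure Ω)
    (Y : ℕ → Ω → ℤ) (hYmeas : ∀ n, Measurable (Y n))
    (hYindep : iIndepFun Y P)
    (M : ℕ) (S : Set (Fin M → ℤ)) (n : ℕ) :
    P ((⋂ j ∈ Finset.range n, blockVec Y M j ⁻¹' S) ∩ blockVec Y M n ⁻¹' S)
      = P (⋂ j ∈ Finset.range n, blockVec Y M j ⁻¹' S) * P (blockVec Y M n ⁻¹' S) := by
  classical
  have hST : Disjoint (Finset.range (n * M)) ((Finset.range M).image (fun i => n * M + i)) := by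
    rw [Finset.disjoint_left]
    intro a haS haT
    rw [Finset.mem_range] at haS
    obtain ⟨i, _, rfl⟩ := Finset.mem_image.1 haT
    omega
  have hIF := hYindep.indepFun_finset _ _ hST hYmeas
  have hφmeas : Measurable
      (fun (w : (i : ((Finset.range M).image (fun i => n * M + i) : Finset ℕ)) → ℤ)
        (i : Fin M) => w ⟨n * M + i, Finset.mem_image.2 ⟨i, Finset.mem_range.2 i.2, rfl⟩⟩) :=
    measurable_of_countable _
  have hIF2 : IndepFun (fun a (i : (Finset.range (n * M) : Finset ℕ)) => Y i a)
      (blockVec Y M n) P := by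
    have h := hIF.comp measurable_id hφmeas
    exact h
  have hkey := hIF2.measure_inter_preimage_eq_mul
    (s := {w : (i : (Finset.range (n * M) : Finset ℕ)) → ℤ | ∀ j < n, (fun i : Fin M =>
        if h : j * M + (i : ℕ) < n * M then w ⟨j * M + i, Finset.mem_range.2 h⟩ else 0) ∈ S})
    (t := S) MeasurableSet.of_discrete MeasurableSet.of_discrete
  have hpre : (fun a (i : (Finset.range (n * M) : Finset ℕ)) => Y i a) ⁻¹'
      {w : (i : (Finset.range (n * M) : Finset ℕ)) → ℤ | ∀ j < n, (fun i : Fin M =>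
        if h : j * M + (i : ℕ) < n * M then w ⟨j * M + i, Finset.mem_range.2 h⟩ else 0) ∈ S}
      = ⋂ j ∈ Finset.range n, blockVec Y M j ⁻¹' S := by
    ext ω
    simp only [Set.mem_preimage, Set.mem_setOf_eq, Set.mem_iInter, Finset.mem_range]
    have hE : ∀ j, j < n → (fun i : Fin M =>
        if h : j * M + (i : ℕ) < n * M then Y (j * M + i) ω else 0) = blockVec Y M j ω := by
      intro j hj
      funext i
      have h : j * M + (i : ℕ) < n * M := by
        calc j * M + (i : ℕ) < j * M + M := by have := i.2; omega
          _ = (j + 1) * M := by ring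
          _ ≤ n * M := Nat.mul_le_mul_right M (by omega)
      rw [dif_pos h]
      rfl
    constructor
    · intro h j hj
      rw [← hE j hj]
      exact h j hj
    · intro h j hj
      rw [hE j hj]
      exact h j hj
  rw [hpre] at hkey
  exact hkey

/-- (Block estimate in Lemma 5.3) If a random walk on `ℤ` with i.i.d. increments
satisfies `P(R_k < k^{1/4}) ≤ c k^{-1/4}` for all `k ≥ 1`, then, via the subdivision of
`[0,k]` into blocks of length `⌈k^{1/2}⌉`,
`P(R_k < k^{1/8}) ≤ (c k^{-1/8})^{⌈k^{1/2}⌉ − 2}` for all `k ≥ 1`. -/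
theorem stmt_5 {Ω : Type*} [MeasurableSpace Ω] (P : Measure Ω) [IsProbabilityMeasure P]
    (p : ℤ → ℝ) (hp0 : ∀ z, 0 ≤ p z) (hp1 : ∑' z : ℤ, p z = 1)
    (Y : ℕ → Ω → ℤ) (hYmeas : ∀ n, Measurable (Y n))
    (hYindep : iIndepFun Y P)
    (hYlaw : ∀ n z, P {ω | Y n ω = z} = ENNReal.ofReal (p z))
    (X : ℕ → Ω → ℤ) (hX : ∀ n ω, X n ω = ∑ i ∈ Finset.range n, Y i ω)
    (c : ℝ) (hc : 0 < c)
    (hquarter : ∀ k : ℕ, 1 ≤ k →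
      P {ω | ((walkRange X k ω : ℝ)) < (k : ℝ) ^ ((1 : ℝ) / 4)} ≤
        ENNReal.ofReal (c * (k : ℝ) ^ (-(1 : ℝ) / 4))) :
    ∀ k : ℕ, 1 ≤ k →
      P {ω | ((walkRange X k ω : ℝ)) < (k : ℝ) ^ ((1 : ℝ) / 8)} ≤
        ENNReal.ofReal ((c * (k : ℝ) ^ (-(1 : ℝ) / 8)) ^ (⌈Real.sqrt k⌉ - 2)) := by
  intro k hk
  by_cases hk1 : k = 1
  · subst hk1
    have h0 : P {ω | ((walkRange X 1 ω : ℝ)) < ((1 : ℕ) : ℝ) ^ ((1 : ℝ) / 8)} = 0 := by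
      refine measure_mono_null (t := ∅) ?_ measure_empty
      intro ω hω
      simp only [Set.mem_setOf_eq] at hω
      have h1 : 1 ≤ walkRange X 1 ω :=
        Finset.card_pos.2 ((Finset.nonempty_range_iff.2 (by norm_num)).image _)
      have h2 : ((1 : ℕ) : ℝ) ^ ((1 : ℝ) / 8) = 1 := by norm_num
      rw [h2] at hω
      have h3 : (1 : ℝ) ≤ (walkRange X 1 ω : ℝ) := by exact_mod_cast h1
      exact absurd hω (not_lt.2 h3)
    exact h0.le.trans zero_le
  have hk2 : 2 ≤ k := by omega
  have hkR : (1 : ℝ) < (k : ℝ) := by exact_mod_cast (by omega : 1 < k)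
  have hk0R : (0 : ℝ) < (k : ℝ) := by linarith
  have hsq : (1 : ℝ) < Real.sqrt k := by
    rw [show (1 : ℝ) = Real.sqrt 1 by simp]
    exact Real.sqrt_lt_sqrt (by norm_num) hkR
  set M : ℕ := ⌈Real.sqrt k⌉₊ with hMdef
  have hceil : ⌈Real.sqrt (k : ℝ)⌉ = (M : ℤ) :=
    (Int.natCast_ceil_eq_ceil (Real.sqrt_nonneg _)).symm
  have hM2 : 2 ≤ M := by
    have := Nat.lt_ceil.2 (show ((1 : ℕ) : ℝ) < Real.sqrt k by exact_mod_cast hsq)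
    omega
  have hskM : Real.sqrt k ≤ (M : ℝ) := Nat.le_ceil _
  by_cases hM3 : M < 3
  · -- M = 2 : the exponent is 0 and the bound is trivial
    have h0 : ((M : ℤ) - 2) = 0 := by omega
    rw [hceil, h0, zpow_zero, ENNReal.ofReal_one]
    exact prob_le_one
  push_neg at hM3
  -- main case : M ≥ 3
  set x : ℝ := c * (k : ℝ) ^ (-(1 : ℝ) / 8) with hxdef
  have hx0 : 0 < x := by
    have h := Real.rpow_pos_of_pos hk0R (-(1 : ℝ) / 8)
    positivity
  set xr : ℝ := (k : ℝ) ^ ((1 : ℝ) / 8) with hxrdef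
  set Sev : Set (Fin M → ℤ) := {v | ((sumCard M v : ℝ)) < xr} with hSev
  set N : ℕ := M - 2 with hNdef
  -- numeric fact : N * M ≤ k
  have hM1k : (M - 1) * (M - 1) < k := by
    have h1 : ((M - 1 : ℕ) : ℝ) < Real.sqrt k := Nat.lt_ceil.1 (by omega)
    have h2 : ((M - 1 : ℕ) : ℝ) * ((M - 1 : ℕ) : ℝ) < Real.sqrt k * Real.sqrt k :=
      mul_self_lt_mul_self (by positivity) h1
    rw [Real.mul_self_sqrt hk0R.le] at h2
    exact_mod_cast h2
  have hNMk : N * M ≤ k := by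
    obtain ⟨a, hMa⟩ : ∃ a, M = a + 3 := ⟨M - 3, by omega⟩
    have hNa : N = a + 1 := by omega
    have hMb : M - 1 = a + 2 := by omega
    have h2 : (a + 1) * (a + 3) ≤ (a + 2) * (a + 2) := by nlinarith
    rw [hMb] at hM1k
    rw [hNa, hMa]
    exact h2.trans hM1k.le
  -- each block event has probability at most ofReal x
  have hA0 : P (blockVec Y M 0 ⁻¹' Sev) ≤ ENNReal.ofReal x := by
    have hwR : blockVec Y M 0 ⁻¹' Sev = {ω | ((walkRange X M ω : ℝ)) < xr} := by
      ext ω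
      simp only [Set.mem_preimage, hSev, Set.mem_setOf_eq]
      rw [blockCard_eq Y X hX M 0 ω]
      simp [walkRange]
    have hxrM : xr ≤ (M : ℝ) ^ ((1 : ℝ) / 4) := by
      have h1 : xr = (Real.sqrt k) ^ ((1 : ℝ) / 4) := by
        rw [hxrdef, Real.sqrt_eq_rpow, ← Real.rpow_mul hk0R.le]
        norm_num
      rw [h1]
      exact Real.rpow_le_rpow (Real.sqrt_nonneg _) hskM (by norm_num)
    have hsub0 : blockVec Y M 0 ⁻¹' Sev ⊆
        {ω | ((walkRange X M ω : ℝ)) < (M : ℝ) ^ ((1 : ℝ) / 4)} := by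
      rw [hwR]
      intro ω hω
      exact lt_of_lt_of_le hω hxrM
    have hxle : c * (M : ℝ) ^ (-(1 : ℝ) / 4) ≤ x := by
      rw [hxdef]
      refine mul_le_mul_of_nonneg_left ?_ hc.le
      have hM0 : (0 : ℝ) < (M : ℝ) := by positivity
      have h4 : (M : ℝ) ^ (-(1 : ℝ) / 4) = ((M : ℝ) ^ ((1 : ℝ) / 4))⁻¹ := by
        rw [show (-(1 : ℝ) / 4) = -((1 : ℝ) / 4) by norm_num, Real.rpow_neg hM0.le]
      have h8 : (k : ℝ) ^ (-(1 : ℝ) / 8) = ((k : ℝ) ^ ((1 : ℝ) / 8))⁻¹ := by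
        rw [show (-(1 : ℝ) / 8) = -((1 : ℝ) / 8) by norm_num, Real.rpow_neg hk0R.le]
      rw [h4, h8]
      have hxr0 : (0 : ℝ) < (k : ℝ) ^ ((1 : ℝ) / 8) := Real.rpow_pos_of_pos hk0R _
      exact inv_anti₀ hxr0 hxrM
    calc P (blockVec Y M 0 ⁻¹' Sev)
        ≤ P {ω | ((walkRange X M ω : ℝ)) < (M : ℝ) ^ ((1 : ℝ) / 4)} := measure_mono hsub0
      _ ≤ ENNReal.ofReal (c * (M : ℝ) ^ (-(1 : ℝ) / 4)) := hquarter M (by omega)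
      _ ≤ ENNReal.ofReal x := ENNReal.ofReal_le_ofReal hxle
  have hAj : ∀ j, P (blockVec Y M j ⁻¹' Sev) ≤ ENNReal.ofReal x := fun j =>
    (blockVec_prob_eq P p Y hYmeas hYindep hYlaw M j Sev).le.trans hA0
  -- induction on the number of blocks
  have hind : ∀ n, P (⋂ j ∈ Finset.range n, blockVec Y M j ⁻¹' Sev) ≤ (ENNReal.ofReal x) ^ n := by
    intro n
    induction n with
    | zero => simp
    | succ n ih =>
      rw [Finset.range_add_one, Finset.set_biInter_insert, Set.inter_comm,
        blockVec_indep_step P Y hYmeas hYindep M Sev n]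
      calc P (⋂ j ∈ Finset.range n, blockVec Y M j ⁻¹' Sev) * P (blockVec Y M n ⁻¹' Sev)
          ≤ (ENNReal.ofReal x) ^ n * ENNReal.ofReal x := mul_le_mul' ih (hAj n)
        _ = (ENNReal.ofReal x) ^ (n + 1) := (pow_succ _ n).symm
  -- the big event is contained in the intersection of the block events
  have hsub : {ω | ((walkRange X k ω : ℝ)) < xr} ⊆
      ⋂ j ∈ Finset.range N, blockVec Y M j ⁻¹' Sev := by
    intro ω hω
    simp only [Set.mem_setOf_eq] at hω
    simp only [Set.mem_iInter, Set.mem_preimage, Finset.mem_range]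
    intro j hj
    simp only [hSev, Set.mem_setOf_eq]
    rw [blockCard_eq Y X hX M j ω]
    have hcard : ((Finset.range (M + 1)).image fun i => X (j * M + i) ω).card
        ≤ walkRange X k ω := by
      apply Finset.card_le_card
      intro z hz
      obtain ⟨i, hi, rfl⟩ := Finset.mem_image.1 hz
      refine Finset.mem_image.2 ⟨j * M + i, Finset.mem_range.2 ?_, rfl⟩
      have hiM : i < M + 1 := Finset.mem_range.1 hi
      have h1 : (j + 1) * M ≤ N * M := Nat.mul_le_mul_right M (by omega)
      have h2 : (j + 1) * M = j * M + M := by ring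
      omega
    have hcast : (((Finset.range (M + 1)).image fun i => X (j * M + i) ω).card : ℝ)
        ≤ (walkRange X k ω : ℝ) := by exact_mod_cast hcard
    exact lt_of_le_of_lt hcast hω
  refine le_trans (measure_mono hsub) (le_trans (hind N) ?_)
  rw [hceil]
  have hzp : x ^ ((M : ℤ) - 2) = x ^ N := by
    have h1 : ((M : ℤ) - 2) = (N : ℤ) := by omega
    rw [h1, zpow_natCast]
  rw [hzp, ENNReal.ofReal_pow hx0.le]

end
end

section
/- Let Z_n be i.i.d. exponential(1) random variables, and let X_1, Y_1, X_2, Y_2, …, X_n be random variables adapted to a filtration such that the conditional law of each X_i given the past is stochastically dominated by exponential(1), and likewise the conditional law of each Y_i given the past stochastically dominates exponential(1). Then for any bounded measurable function F_n(x_1, y_1, …, x_n) that is increasing in each x-variable and decreasing in each y-variable, E(F_n(X_1, Y_1, …, X_n)) ≤ E(F_n(Z_1, Z_2, …, Z_{2n−1})). -/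
set_option maxHeartbeats 4000000

open MeasureTheory ProbabilityTheory Set Filter
open scoped ENNReal

namespace Stmt10Aux

lemma expIoi (t : ℝ) (ht : 0 ≤ t) : expMeasure 1 (Set.Ioi t) = ENNReal.ofReal (Real.exp (-t)) := by
  haveI : IsProbabilityMeasure (expMeasure 1) := isProbabilityMeasure_expMeasure one_pos
  have h1 : expMeasure 1 (Set.Iic t) = ENNReal.ofReal (1 - Real.exp (-t)) := by
    rw [← ofReal_cdf]
    rw [cdf_expMeasure_eq one_pos]
    simp [ht]
  have h2 : Set.Ioi t = (Set.Iic t)ᶜ := by simp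
  rw [h2, measure_compl measurableSet_Iic (measure_ne_top _ _), h1, measure_univ]
  rw [← ENNReal.ofReal_one, ← ENNReal.ofReal_sub _ (by
    have := Real.exp_le_one_iff.mpr (by linarith : -t ≤ 0); linarith)]
  norm_num

/-- conditional survival bound gives a set-wise bound (dominated direction). -/
lemma cond_bound_le {Ω : Type*} {G : MeasurableSpace Ω} [m0 : MeasurableSpace Ω]
    (P : Measure Ω) [IsProbabilityMeasure P]
    (hG : G ≤ m0) {W : Ω → ℝ} (hWm : Measurable W)
    {t : ℝ}
    (hdom : ∀ᵐ ω ∂P,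
      (P[Set.indicator {ω' | t < W ω'} (fun _ => (1 : ℝ)) | G]) ω ≤ Real.exp (-t))
    {C : Set Ω} (hC : MeasurableSet[G] C) :
    P (C ∩ {ω | t < W ω}) ≤ ENNReal.ofReal (Real.exp (-t)) * P C := by
  have hS : MeasurableSet {ω | t < W ω} := hWm measurableSet_Ioi
  have hind : Integrable (Set.indicator {ω' | t < W ω'} (fun _ => (1 : ℝ))) P :=
    (integrable_const 1).indicator hS
  have h1 : ∫ ω in C, Set.indicator {ω' | t < W ω'} (fun _ => (1 : ℝ)) ω ∂P
      = (P (C ∩ {ω | t < W ω})).toReal := by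
    rw [setIntegral_indicator hS]
    simp [measureReal_def]
  have h2 := setIntegral_condExp hG hind hC
  have h3 : ∫ ω in C, (P[Set.indicator {ω' | t < W ω'} (fun _ => (1 : ℝ)) | G]) ω ∂P
      ≤ ∫ ω in C, Real.exp (-t) ∂P := by
    refine integral_mono_ae integrable_condExp.integrableOn
      (integrableOn_const (measure_ne_top _ _)) ?_
    exact ae_restrict_of_ae hdom
  rw [h2, h1] at h3
  have h4 : ∫ _ω in C, Real.exp (-t) ∂P = Real.exp (-t) * (P C).toReal := by
    rw [setIntegral_const]; rw [smul_eq_mul, mul_comm, measureReal_def]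
  rw [h4] at h3
  calc P (C ∩ {ω | t < W ω})
      = ENNReal.ofReal ((P (C ∩ {ω | t < W ω})).toReal) :=
        (ENNReal.ofReal_toReal (measure_ne_top _ _)).symm
    _ ≤ ENNReal.ofReal (Real.exp (-t) * (P C).toReal) := ENNReal.ofReal_le_ofReal h3
    _ = ENNReal.ofReal (Real.exp (-t)) * P C := by
        rw [ENNReal.ofReal_mul (Real.exp_nonneg _), ENNReal.ofReal_toReal (measure_ne_top _ _)]

/-- conditional survival bound gives a set-wise bound (dominating direction). -/
lemma cond_bound_ge {Ω : Type*} {G : MeasurableSpace Ω} [m0 : MeasurableSpace Ω]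
    (P : Measure Ω) [IsProbabilityMeasure P]
    (hG : G ≤ m0) {W : Ω → ℝ} (hWm : Measurable W)
    {t : ℝ}
    (hdom : ∀ᵐ ω ∂P,
      Real.exp (-t) ≤ (P[Set.indicator {ω' | t < W ω'} (fun _ => (1 : ℝ)) | G]) ω)
    {C : Set Ω} (hC : MeasurableSet[G] C) :
    ENNReal.ofReal (Real.exp (-t)) * P C ≤ P (C ∩ {ω | t < W ω}) := by
  have hS : MeasurableSet {ω | t < W ω} := hWm measurableSet_Ioi
  have hind : Integrable (Set.indicator {ω' | t < W ω'} (fun _ => (1 : ℝ))) P :=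
    (integrable_const 1).indicator hS
  have h1 : ∫ ω in C, Set.indicator {ω' | t < W ω'} (fun _ => (1 : ℝ)) ω ∂P
      = (P (C ∩ {ω | t < W ω})).toReal := by
    rw [setIntegral_indicator hS]
    simp [measureReal_def]
  have h2 := setIntegral_condExp hG hind hC
  have h3 : ∫ ω in C, Real.exp (-t) ∂P
      ≤ ∫ ω in C, (P[Set.indicator {ω' | t < W ω'} (fun _ => (1 : ℝ)) | G]) ω ∂P := by
    refine integral_mono_ae (integrableOn_const (measure_ne_top _ _))
      integrable_condExp.integrableOn ?_
    exact ae_restrict_of_ae hdom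
  rw [h2, h1] at h3
  have h4 : ∫ _ω in C, Real.exp (-t) ∂P = Real.exp (-t) * (P C).toReal := by
    rw [setIntegral_const]; rw [smul_eq_mul, mul_comm, measureReal_def]
  rw [h4] at h3
  calc ENNReal.ofReal (Real.exp (-t)) * P C
      = ENNReal.ofReal (Real.exp (-t) * (P C).toReal) := by
        rw [ENNReal.ofReal_mul (Real.exp_nonneg _), ENNReal.ofReal_toReal (measure_ne_top _ _)]
    _ ≤ ENNReal.ofReal ((P (C ∩ {ω | t < W ω})).toReal) := ENNReal.ofReal_le_ofReal h3
    _ = P (C ∩ {ω | t < W ω}) := ENNReal.ofReal_toReal (measure_ne_top _ _)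


/-- Stochastic domination on random upper sets, dominated direction. -/
lemma upper_le {Ω : Type*} {G : MeasurableSpace Ω} [m0 : MeasurableSpace Ω]
    (P : Measure Ω) [IsProbabilityMeasure P] (hG : G ≤ m0)
    {W : Ω → ℝ} (hWm : Measurable W) (hW0 : ∀ ω, 0 ≤ W ω)
    (hdom : ∀ t : ℝ, 0 ≤ t → ∀ᵐ ω ∂P,
      (P[Set.indicator {ω' | t < W ω'} (fun _ => (1 : ℝ)) | G]) ω ≤ Real.exp (-t))
    (A : Ω → Set ℝ)
    (hA : MeasurableSet[G.prod (inferInstance : MeasurableSpace ℝ)] {p : Ω × ℝ | p.2 ∈ A p.1})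
    (hupper : ∀ ω : Ω, ∀ x ∈ A ω, ∀ y, x ≤ y → y ∈ A ω) :
    P {ω | W ω ∈ A ω} ≤ ∫⁻ ω, expMeasure 1 (A ω) ∂P := by
  classical
  haveI : IsProbabilityMeasure (expMeasure 1) := isProbabilityMeasure_expMeasure one_pos
  set ν := expMeasure 1 with hνdef
  have hprodle : (G.prod (inferInstance : MeasurableSpace ℝ)) ≤
      (m0.prod (inferInstance : MeasurableSpace ℝ)) :=
    sup_le_sup_right (MeasurableSpace.comap_mono hG) _
  have hAm0 : MeasurableSet {p : Ω × ℝ | p.2 ∈ A p.1} := hprodle _ hA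
  have hsec : ∀ x : ℝ, MeasurableSet[G] {ω | x ∈ A ω} := fun x =>
    (@measurable_prodMk_right Ω ℝ G _ x) hA
  have hνAG : Measurable[G] (fun ω => ν (A ω)) :=
    @measurable_measure_prodMk_left Ω ℝ G _ ν _ _ hA
  have hνA : Measurable (fun ω => ν (A ω)) := hνAG.mono hG le_rfl
  have hEvent : MeasurableSet {ω | W ω ∈ A ω} := (measurable_id.prodMk hWm) hAm0
  have key : ∀ δ : ℝ, 0 < δ →
      P {ω | W ω ∈ A ω} ≤ ENNReal.ofReal (Real.exp δ) * ∫⁻ ω, ν (A ω) ∂P := by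
    intro δ hδ
    set B : ℕ → Set Ω := fun j => {ω | (j : ℝ) * δ ∈ A ω} with hBdef
    have hBmeas : ∀ j, MeasurableSet[G] (B j) := fun j => hsec _
    set Cs : ℕ → Set Ω := fun j => Nat.casesOn j (B 0) (fun i => B (i + 1) \ B i) with hCdef
    have hCsub : ∀ j, Cs j ⊆ B j := by
      intro j; cases j with
      | zero => exact subset_rfl
      | succ i => exact diff_subset
    have hCmeasG : ∀ j, MeasurableSet[G] (Cs j) := by
      intro j; cases j with
      | zero => exact hBmeas 0
      | succ i => exact (hBmeas (i + 1)).diff (hBmeas i)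
    have hCmeas0 : ∀ j, MeasurableSet (Cs j) := fun j => hG _ (hCmeasG j)
    have hBmono : ∀ j k : ℕ, j ≤ k → B j ⊆ B k := by
      intro j k hjk ω hω
      refine hupper ω _ hω _ ?_
      have : (j : ℝ) ≤ (k : ℝ) := Nat.cast_le.2 hjk
      nlinarith
    have hCdisj : Pairwise (Function.onFun Disjoint Cs) := by
      have haux : ∀ j k : ℕ, j < k → Disjoint (Cs j) (Cs k) := by
        intro j k hjk
        obtain ⟨i, rfl⟩ : ∃ i, k = i + 1 := ⟨k - 1, by omega⟩
        rw [Set.disjoint_left]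
        intro ω hωj hωk
        exact hωk.2 (hBmono j i (by omega) (hCsub j hωj))
      intro j k hne
      rcases lt_or_gt_of_ne hne with h | h
      · exact haux j k h
      · exact (haux k j h).symm
    have hcover : {ω | W ω ∈ A ω} ⊆
        ⋃ j : ℕ, Cs j ∩ {ω | (j : ℝ) * δ - δ < W ω} := by
      intro ω hω
      have hex : ∃ j : ℕ, ω ∈ B j := by
        refine ⟨⌈W ω / δ⌉₊, hupper ω _ hω _ ?_⟩
        have h1 : W ω / δ ≤ (⌈W ω / δ⌉₊ : ℝ) := Nat.le_ceil _
        calc W ω = (W ω / δ) * δ := by field_simp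
          _ ≤ (⌈W ω / δ⌉₊ : ℝ) * δ := by nlinarith
      have hj0B : ω ∈ B (Nat.find hex) := Nat.find_spec hex
      refine Set.mem_iUnion.2 ⟨Nat.find hex, ?_, ?_⟩
      · rcases Nat.eq_zero_or_pos (Nat.find hex) with h0 | hpos
        · rw [h0] at hj0B ⊢; exact hj0B
        · obtain ⟨i, hsucc⟩ : ∃ i, Nat.find hex = i + 1 := ⟨Nat.find hex - 1, by omega⟩
          rw [hsucc] at hj0B ⊢
          exact ⟨hj0B, Nat.find_min hex (by omega)⟩
      · rcases Nat.eq_zero_or_pos (Nat.find hex) with h0 | hpos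
        · rw [h0]
          simp only [Nat.cast_zero, zero_mul, Set.mem_setOf_eq]
          have := hW0 ω; linarith
        · obtain ⟨i, hsucc⟩ : ∃ i, Nat.find hex = i + 1 := ⟨Nat.find hex - 1, by omega⟩
          by_contra hcon
          simp only [Set.mem_setOf_eq, not_lt] at hcon
          have hmem : ω ∈ B i := by
            refine hupper ω _ hω _ ?_
            rw [hsucc] at hcon
            push_cast at hcon ⊢
            linarith
          exact Nat.find_min hex (by omega) hmem
    have hterm : ∀ j : ℕ, P (Cs j ∩ {ω | (j : ℝ) * δ - δ < W ω})
        ≤ ENNReal.ofReal (Real.exp δ) * ∫⁻ ω in Cs j, ν (A ω) ∂P := by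
      intro j
      have hone_le : (1 : ℝ≥0∞) ≤ ENNReal.ofReal (Real.exp δ) := by
        rw [← ENNReal.ofReal_one]
        exact ENNReal.ofReal_le_ofReal (Real.one_le_exp hδ.le)
      cases j with
      | zero =>
        have h1 : P (Cs 0 ∩ {ω | (0 : ℝ) * δ - δ < W ω}) ≤ P (Cs 0) :=
          measure_mono Set.inter_subset_left
        have h2 : P (Cs 0) ≤ ∫⁻ ω in Cs 0, ν (A ω) ∂P := by
          rw [← setLIntegral_one]
          refine setLIntegral_mono hνA fun ω hω => ?_
          have h0 : (0 : ℝ) ∈ A ω := by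
            have h := hCsub 0 hω
            simp only [hBdef, Set.mem_setOf_eq, Nat.cast_zero, zero_mul] at h
            exact h
          have hIoi : Set.Ioi (0 : ℝ) ⊆ A ω := fun x hx => hupper ω _ h0 _ (le_of_lt hx)
          calc (1 : ℝ≥0∞) = ν (Set.Ioi (0 : ℝ)) := by
                rw [hνdef, expIoi 0 le_rfl]; simp
            _ ≤ ν (A ω) := measure_mono hIoi
        calc P (Cs 0 ∩ {ω | ((0 : ℕ) : ℝ) * δ - δ < W ω}) ≤ ∫⁻ ω in Cs 0, ν (A ω) ∂P := by
              refine le_trans (measure_mono Set.inter_subset_left) h2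
          _ ≤ ENNReal.ofReal (Real.exp δ) * ∫⁻ ω in Cs 0, ν (A ω) ∂P :=
              le_mul_of_one_le_left zero_le hone_le
      | succ i =>
        have hset : {ω | ((i + 1 : ℕ) : ℝ) * δ - δ < W ω} = {ω | (i : ℝ) * δ < W ω} := by
          ext ω; simp only [Set.mem_setOf_eq]; push_cast; constructor <;> intro h <;> nlinarith
        rw [hset]
        have h1 : P (Cs (i + 1) ∩ {ω | (i : ℝ) * δ < W ω})
            ≤ ENNReal.ofReal (Real.exp (-((i : ℝ) * δ))) * P (Cs (i + 1)) :=
          cond_bound_le P hG hWm (hdom _ (by positivity)) (hCmeasG (i + 1))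
        have h2 : P (Cs (i + 1)) = (ENNReal.ofReal (Real.exp (-((i + 1 : ℝ) * δ))))⁻¹ *
            (ENNReal.ofReal (Real.exp (-((i + 1 : ℝ) * δ))) * P (Cs (i + 1))) := by
          rw [← mul_assoc, ENNReal.inv_mul_cancel (by positivity) ENNReal.ofReal_ne_top, one_mul]
        have h3 : ENNReal.ofReal (Real.exp (-((i + 1 : ℝ) * δ))) * P (Cs (i + 1))
            ≤ ∫⁻ ω in Cs (i + 1), ν (A ω) ∂P := by
          rw [← setLIntegral_const]
          refine setLIntegral_mono hνA fun ω hω => ?_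
          have hmem : ((i + 1 : ℕ) : ℝ) * δ ∈ A ω := hCsub (i + 1) hω
          have hIoi : Set.Ioi ((i + 1 : ℝ) * δ) ⊆ A ω := by
            intro x hx
            refine hupper ω _ hmem _ ?_
            push_cast
            exact le_of_lt hx
          calc ENNReal.ofReal (Real.exp (-((i + 1 : ℝ) * δ)))
              = ν (Set.Ioi ((i + 1 : ℝ) * δ)) := by rw [hνdef, expIoi _ (by positivity)]
            _ ≤ ν (A ω) := measure_mono hIoi
        calc P (Cs (i + 1) ∩ {ω | (i : ℝ) * δ < W ω})
            ≤ ENNReal.ofReal (Real.exp (-((i : ℝ) * δ))) * P (Cs (i + 1)) := h1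
          _ = ENNReal.ofReal (Real.exp δ) *
              (ENNReal.ofReal (Real.exp (-((i + 1 : ℝ) * δ))) * P (Cs (i + 1))) := by
              rw [← mul_assoc, ← ENNReal.ofReal_mul (Real.exp_nonneg _), ← Real.exp_add]
              ring_nf
          _ ≤ ENNReal.ofReal (Real.exp δ) * ∫⁻ ω in Cs (i + 1), ν (A ω) ∂P :=
              mul_le_mul_right h3 _
    calc P {ω | W ω ∈ A ω}
        ≤ P (⋃ j : ℕ, Cs j ∩ {ω | (j : ℝ) * δ - δ < W ω}) := measure_mono hcover
      _ ≤ ∑' j : ℕ, P (Cs j ∩ {ω | (j : ℝ) * δ - δ < W ω}) := measure_iUnion_le _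
      _ ≤ ∑' j : ℕ, ENNReal.ofReal (Real.exp δ) * ∫⁻ ω in Cs j, ν (A ω) ∂P :=
          ENNReal.tsum_le_tsum hterm
      _ = ENNReal.ofReal (Real.exp δ) * ∑' j : ℕ, ∫⁻ ω in Cs j, ν (A ω) ∂P :=
          ENNReal.tsum_mul_left
      _ = ENNReal.ofReal (Real.exp δ) * ∫⁻ ω in ⋃ j, Cs j, ν (A ω) ∂P := by
          rw [lintegral_iUnion hCmeas0 hCdisj]
      _ ≤ ENNReal.ofReal (Real.exp δ) * ∫⁻ ω, ν (A ω) ∂P :=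
          mul_le_mul_right (lintegral_mono' Measure.restrict_le_self le_rfl) _
  -- pass to the limit δ → 0
  have hfin : ∫⁻ ω, ν (A ω) ∂P ≠ ∞ := by
    refine ne_of_lt (lt_of_le_of_lt (lintegral_mono fun ω => prob_le_one) ?_)
    rw [lintegral_one, measure_univ]
    exact ENNReal.one_lt_top
  have hreal : ∀ δ : ℝ, 0 < δ →
      (P {ω | W ω ∈ A ω}).toReal ≤ Real.exp δ * (∫⁻ ω, ν (A ω) ∂P).toReal := by
    intro δ hδ
    have h1 := key δ hδ
    have h2 : (ENNReal.ofReal (Real.exp δ) * ∫⁻ ω, ν (A ω) ∂P).toReal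
        = Real.exp δ * (∫⁻ ω, ν (A ω) ∂P).toReal := by
      rw [ENNReal.toReal_mul, ENNReal.toReal_ofReal (Real.exp_nonneg δ)]
    calc (P {ω | W ω ∈ A ω}).toReal
        ≤ (ENNReal.ofReal (Real.exp δ) * ∫⁻ ω, ν (A ω) ∂P).toReal :=
          ENNReal.toReal_mono (ENNReal.mul_ne_top ENNReal.ofReal_ne_top hfin) h1
      _ = _ := h2
  have hlim : (P {ω | W ω ∈ A ω}).toReal ≤ (∫⁻ ω, ν (A ω) ∂P).toReal := by
    have h1 : Tendsto (fun δ : ℝ => Real.exp δ * (∫⁻ ω, ν (A ω) ∂P).toReal)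
        (nhdsWithin 0 (Set.Ioi 0)) (nhds (Real.exp 0 * (∫⁻ ω, ν (A ω) ∂P).toReal)) :=
      (((Real.continuous_exp.tendsto 0).mono_left nhdsWithin_le_nhds).mul tendsto_const_nhds)
    rw [Real.exp_zero, one_mul] at h1
    exact ge_of_tendsto h1 (eventually_nhdsWithin_of_forall fun δ hδ => hreal δ hδ)
  calc P {ω | W ω ∈ A ω}
      = ENNReal.ofReal ((P {ω | W ω ∈ A ω}).toReal) :=
        (ENNReal.ofReal_toReal (measure_ne_top _ _)).symm
    _ ≤ ENNReal.ofReal ((∫⁻ ω, ν (A ω) ∂P).toReal) := ENNReal.ofReal_le_ofReal hlim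
    _ = ∫⁻ ω, ν (A ω) ∂P := ENNReal.ofReal_toReal hfin


/-- Stochastic domination on random upper sets, dominating direction. -/
lemma upper_ge {Ω : Type*} {G : MeasurableSpace Ω} [m0 : MeasurableSpace Ω]
    (P : Measure Ω) [IsProbabilityMeasure P] (hG : G ≤ m0)
    {W : Ω → ℝ} (hWm : Measurable W) (hW0 : ∀ ω, 0 ≤ W ω)
    (hdom : ∀ t : ℝ, 0 ≤ t → ∀ᵐ ω ∂P,
      Real.exp (-t) ≤ (P[Set.indicator {ω' | t < W ω'} (fun _ => (1 : ℝ)) | G]) ω)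
    (A : Ω → Set ℝ)
    (hA : MeasurableSet[G.prod (inferInstance : MeasurableSpace ℝ)] {p : Ω × ℝ | p.2 ∈ A p.1})
    (hupper : ∀ ω : Ω, ∀ x ∈ A ω, ∀ y, x ≤ y → y ∈ A ω) :
    ∫⁻ ω, expMeasure 1 (A ω) ∂P ≤ P {ω | W ω ∈ A ω} := by
  classical
  haveI : IsProbabilityMeasure (expMeasure 1) := isProbabilityMeasure_expMeasure one_pos
  set ν := expMeasure 1 with hνdef
  have hprodle : (G.prod (inferInstance : MeasurableSpace ℝ)) ≤
      (m0.prod (inferInstance : MeasurableSpace ℝ)) :=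
    sup_le_sup_right (MeasurableSpace.comap_mono hG) _
  have hAm0 : MeasurableSet {p : Ω × ℝ | p.2 ∈ A p.1} := hprodle _ hA
  have hsec : ∀ x : ℝ, MeasurableSet[G] {ω | x ∈ A ω} := fun x =>
    (@measurable_prodMk_right Ω ℝ G _ x) hA
  have hνAG : Measurable[G] (fun ω => ν (A ω)) :=
    @measurable_measure_prodMk_left Ω ℝ G _ ν _ _ hA
  have hνA : Measurable (fun ω => ν (A ω)) := hνAG.mono hG le_rfl
  have hEvent : MeasurableSet {ω | W ω ∈ A ω} := (measurable_id.prodMk hWm) hAm0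
  have key : ∀ δ : ℝ, 0 < δ →
      ∫⁻ ω, ν (A ω) ∂P ≤ ENNReal.ofReal (Real.exp δ) * P {ω | W ω ∈ A ω} := by
    intro δ hδ
    set B : ℕ → Set Ω := fun j => {ω | (j : ℝ) * δ ∈ A ω} with hBdef
    have hBmeas : ∀ j, MeasurableSet[G] (B j) := fun j => hsec _
    set Cs : ℕ → Set Ω := fun j => Nat.casesOn j (B 0) (fun i => B (i + 1) \ B i) with hCdef
    have hCsub : ∀ j, Cs j ⊆ B j := by
      intro j; cases j with
      | zero => exact subset_rfl
      | succ i => exact diff_subset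
    have hCmeasG : ∀ j, MeasurableSet[G] (Cs j) := by
      intro j; cases j with
      | zero => exact hBmeas 0
      | succ i => exact (hBmeas (i + 1)).diff (hBmeas i)
    have hCmeas0 : ∀ j, MeasurableSet (Cs j) := fun j => hG _ (hCmeasG j)
    have hBmono : ∀ j k : ℕ, j ≤ k → B j ⊆ B k := by
      intro j k hjk ω hω
      refine hupper ω _ hω _ ?_
      have : (j : ℝ) ≤ (k : ℝ) := Nat.cast_le.2 hjk
      nlinarith
    have hCdisj : Pairwise (Function.onFun Disjoint Cs) := by
      have haux : ∀ j k : ℕ, j < k → Disjoint (Cs j) (Cs k) := by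
        intro j k hjk
        obtain ⟨i, rfl⟩ : ∃ i, k = i + 1 := ⟨k - 1, by omega⟩
        rw [Set.disjoint_left]
        intro ω hωj hωk
        exact hωk.2 (hBmono j i (by omega) (hCsub j hωj))
      intro j k hne
      rcases lt_or_gt_of_ne hne with h | h
      · exact haux j k h
      · exact (haux k j h).symm
    have hCunion : (⋃ j, Cs j) = ⋃ j, B j := by
      apply Set.Subset.antisymm
      · exact Set.iUnion_mono hCsub
      · intro ω hω
        rw [Set.mem_iUnion] at hω
        have hex : ∃ j : ℕ, ω ∈ B j := hω
        have hj0B : ω ∈ B (Nat.find hex) := Nat.find_spec hex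
        rw [Set.mem_iUnion]
        refine ⟨Nat.find hex, ?_⟩
        rcases Nat.eq_zero_or_pos (Nat.find hex) with h0 | hpos
        · rw [h0] at hj0B ⊢; exact hj0B
        · obtain ⟨i, hsucc⟩ : ∃ i, Nat.find hex = i + 1 := ⟨Nat.find hex - 1, by omega⟩
          rw [hsucc] at hj0B ⊢
          exact ⟨hj0B, Nat.find_min hex (by omega)⟩
    -- outside ⋃ B, the set A ω is empty
    have houtside : ∀ ω, ω ∉ (⋃ j, B j) → A ω = ∅ := by
      intro ω hω
      by_contra hne
      obtain ⟨x, hx⟩ := Set.nonempty_iff_ne_empty.2 hne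
      have : ω ∈ B ⌈max x 0 / δ⌉₊ := by
        refine hupper ω _ hx _ ?_
        have h1 : max x 0 / δ ≤ (⌈max x 0 / δ⌉₊ : ℝ) := Nat.le_ceil _
        have h2 : max x 0 ≤ (⌈max x 0 / δ⌉₊ : ℝ) * δ := by
          calc max x 0 = (max x 0 / δ) * δ := by field_simp
            _ ≤ _ := by nlinarith
        calc x ≤ max x 0 := le_max_left _ _
          _ ≤ _ := h2
      exact hω (Set.mem_iUnion.2 ⟨_, this⟩)
    have hterm : ∀ j : ℕ, ∫⁻ ω in Cs j, ν (A ω) ∂P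
        ≤ ENNReal.ofReal (Real.exp δ) * P (Cs j ∩ {ω | W ω ∈ A ω}) := by
      intro j
      have hone_le : (1 : ℝ≥0∞) ≤ ENNReal.ofReal (Real.exp δ) := by
        rw [← ENNReal.ofReal_one]
        exact ENNReal.ofReal_le_ofReal (Real.one_le_exp hδ.le)
      cases j with
      | zero =>
        have hsub : Cs 0 ∩ {ω | (0 : ℝ) < W ω} ⊆ Cs 0 ∩ {ω | W ω ∈ A ω} := by
          rintro ω ⟨hc, hw⟩
          refine ⟨hc, ?_⟩
          have h0 : (0 : ℝ) ∈ A ω := by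
            have h := hCsub 0 hc
            simp only [hBdef, Set.mem_setOf_eq, Nat.cast_zero, zero_mul] at h
            exact h
          exact hupper ω _ h0 _ (le_of_lt hw)
        have h1 : ∫⁻ ω in Cs 0, ν (A ω) ∂P ≤ P (Cs 0) := by
          rw [← setLIntegral_one]
          exact setLIntegral_mono measurable_const fun ω _ => prob_le_one
        have h2 : P (Cs 0) ≤ P (Cs 0 ∩ {ω | (0 : ℝ) < W ω}) := by
          have := cond_bound_ge P hG hWm (hdom 0 le_rfl) (hCmeasG 0)
          simpa using this
        calc ∫⁻ ω in Cs 0, ν (A ω) ∂P ≤ P (Cs 0) := h1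
          _ ≤ P (Cs 0 ∩ {ω | (0 : ℝ) < W ω}) := h2
          _ ≤ P (Cs 0 ∩ {ω | W ω ∈ A ω}) := measure_mono hsub
          _ ≤ ENNReal.ofReal (Real.exp δ) * P (Cs 0 ∩ {ω | W ω ∈ A ω}) :=
              le_mul_of_one_le_left zero_le hone_le
      | succ i =>
        have hsub : Cs (i + 1) ∩ {ω | ((i + 1 : ℕ) : ℝ) * δ < W ω}
            ⊆ Cs (i + 1) ∩ {ω | W ω ∈ A ω} := by
          rintro ω ⟨hc, hw⟩
          exact ⟨hc, hupper ω _ (hCsub (i + 1) hc) _ (le_of_lt hw)⟩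
        have hAsub : ∀ ω ∈ Cs (i + 1), ν (A ω) ≤ ENNReal.ofReal (Real.exp (-((i : ℝ) * δ))) := by
          intro ω hω
          have hnot : ω ∉ B i := hω.2
          have hsubA : A ω ⊆ Set.Ioi ((i : ℝ) * δ) := by
            intro x hx
            by_contra hcon
            simp only [Set.mem_Ioi, not_lt] at hcon
            exact hnot (hupper ω _ hx _ hcon)
          calc ν (A ω) ≤ ν (Set.Ioi ((i : ℝ) * δ)) := measure_mono hsubA
            _ = ENNReal.ofReal (Real.exp (-((i : ℝ) * δ))) := by
                rw [hνdef, expIoi _ (by positivity)]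
        have h1 : ∫⁻ ω in Cs (i + 1), ν (A ω) ∂P
            ≤ ENNReal.ofReal (Real.exp (-((i : ℝ) * δ))) * P (Cs (i + 1)) := by
          rw [← setLIntegral_const]
          exact setLIntegral_mono measurable_const hAsub
        have h2 : ENNReal.ofReal (Real.exp (-(((i + 1 : ℕ) : ℝ) * δ))) * P (Cs (i + 1))
            ≤ P (Cs (i + 1) ∩ {ω | ((i + 1 : ℕ) : ℝ) * δ < W ω}) :=
          cond_bound_ge P hG hWm (hdom _ (by positivity)) (hCmeasG (i + 1))
        have h3 : ENNReal.ofReal (Real.exp (-((i : ℝ) * δ)))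
            = ENNReal.ofReal (Real.exp δ) * ENNReal.ofReal (Real.exp (-(((i + 1 : ℕ) : ℝ) * δ))) := by
          rw [← ENNReal.ofReal_mul (Real.exp_nonneg _), ← Real.exp_add]
          push_cast
          ring_nf
        calc ∫⁻ ω in Cs (i + 1), ν (A ω) ∂P
            ≤ ENNReal.ofReal (Real.exp (-((i : ℝ) * δ))) * P (Cs (i + 1)) := h1
          _ = ENNReal.ofReal (Real.exp δ) *
              (ENNReal.ofReal (Real.exp (-(((i + 1 : ℕ) : ℝ) * δ))) * P (Cs (i + 1))) := by
              rw [h3, mul_assoc]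
          _ ≤ ENNReal.ofReal (Real.exp δ) *
              P (Cs (i + 1) ∩ {ω | ((i + 1 : ℕ) : ℝ) * δ < W ω}) := mul_le_mul_right h2 _
          _ ≤ ENNReal.ofReal (Real.exp δ) * P (Cs (i + 1) ∩ {ω | W ω ∈ A ω}) :=
              mul_le_mul_right (measure_mono hsub) _
    have hBunion_meas : MeasurableSet (⋃ j, Cs j) := MeasurableSet.iUnion hCmeas0
    have hzero : ∫⁻ ω in (⋃ j, Cs j)ᶜ, ν (A ω) ∂P = 0 := by
      have : ∀ ω ∈ (⋃ j, Cs j)ᶜ, ν (A ω) = 0 := by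
        intro ω hω
        rw [hCunion] at hω
        rw [houtside ω hω, measure_empty]
      refine le_antisymm ?_ zero_le
      calc ∫⁻ ω in (⋃ j, Cs j)ᶜ, ν (A ω) ∂P ≤ ∫⁻ _ω in (⋃ j, Cs j)ᶜ, 0 ∂P :=
            setLIntegral_mono measurable_const fun ω hω => le_of_eq (this ω hω)
        _ = 0 := by simp
    calc ∫⁻ ω, ν (A ω) ∂P
        = ∫⁻ ω in ⋃ j, Cs j, ν (A ω) ∂P + ∫⁻ ω in (⋃ j, Cs j)ᶜ, ν (A ω) ∂P :=
          (lintegral_add_compl _ hBunion_meas).symm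
      _ = ∫⁻ ω in ⋃ j, Cs j, ν (A ω) ∂P := by rw [hzero, add_zero]
      _ = ∑' j : ℕ, ∫⁻ ω in Cs j, ν (A ω) ∂P := lintegral_iUnion hCmeas0 hCdisj _
      _ ≤ ∑' j : ℕ, ENNReal.ofReal (Real.exp δ) * P (Cs j ∩ {ω | W ω ∈ A ω}) :=
          ENNReal.tsum_le_tsum hterm
      _ = ENNReal.ofReal (Real.exp δ) * ∑' j : ℕ, P (Cs j ∩ {ω | W ω ∈ A ω}) :=
          ENNReal.tsum_mul_left
      _ = ENNReal.ofReal (Real.exp δ) * P (⋃ j, Cs j ∩ {ω | W ω ∈ A ω}) := by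
          rw [measure_iUnion ?_ fun j => (hCmeas0 j).inter hEvent]
          exact fun j k hne => Set.disjoint_left.2 fun ω hωj hωk =>
            Set.disjoint_left.1 (hCdisj hne) hωj.1 hωk.1
      _ ≤ ENNReal.ofReal (Real.exp δ) * P {ω | W ω ∈ A ω} := by
          refine mul_le_mul_right (measure_mono ?_) _
          intro ω hω
          rw [Set.mem_iUnion] at hω
          obtain ⟨j, hj⟩ := hω
          exact hj.2
  -- pass to the limit δ → 0
  have hfinL : ∫⁻ ω, ν (A ω) ∂P ≠ ∞ := by
    refine ne_of_lt (lt_of_le_of_lt (lintegral_mono fun ω => prob_le_one) ?_)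
    rw [lintegral_one, measure_univ]
    exact ENNReal.one_lt_top
  have hreal : ∀ δ : ℝ, 0 < δ →
      (∫⁻ ω, ν (A ω) ∂P).toReal ≤ Real.exp δ * (P {ω | W ω ∈ A ω}).toReal := by
    intro δ hδ
    have h1 := key δ hδ
    have h2 : (ENNReal.ofReal (Real.exp δ) * P {ω | W ω ∈ A ω}).toReal
        = Real.exp δ * (P {ω | W ω ∈ A ω}).toReal := by
      rw [ENNReal.toReal_mul, ENNReal.toReal_ofReal (Real.exp_nonneg δ)]
    calc (∫⁻ ω, ν (A ω) ∂P).toReal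
        ≤ (ENNReal.ofReal (Real.exp δ) * P {ω | W ω ∈ A ω}).toReal :=
          ENNReal.toReal_mono (ENNReal.mul_ne_top ENNReal.ofReal_ne_top (measure_ne_top _ _)) h1
      _ = _ := h2
  have hlim : (∫⁻ ω, ν (A ω) ∂P).toReal ≤ (P {ω | W ω ∈ A ω}).toReal := by
    have h1 : Tendsto (fun δ : ℝ => Real.exp δ * (P {ω | W ω ∈ A ω}).toReal)
        (nhdsWithin 0 (Set.Ioi 0)) (nhds (Real.exp 0 * (P {ω | W ω ∈ A ω}).toReal)) :=
      (((Real.continuous_exp.tendsto 0).mono_left nhdsWithin_le_nhds).mul tendsto_const_nhds)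
    rw [Real.exp_zero, one_mul] at h1
    exact ge_of_tendsto h1 (eventually_nhdsWithin_of_forall fun δ hδ => hreal δ hδ)
  calc ∫⁻ ω, ν (A ω) ∂P
      = ENNReal.ofReal ((∫⁻ ω, ν (A ω) ∂P).toReal) := (ENNReal.ofReal_toReal hfinL).symm
    _ ≤ ENNReal.ofReal ((P {ω | W ω ∈ A ω}).toReal) := ENNReal.ofReal_le_ofReal hlim
    _ = P {ω | W ω ∈ A ω} := ENNReal.ofReal_toReal (measure_ne_top _ _)


lemma filter_card_eq (k m : ℕ) :
    ((Finset.Icc 1 k).filter (fun j => j < m)).card = min k (m - 1) := by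
  have : (Finset.Icc 1 k).filter (fun j => j < m) = Finset.Icc 1 (min k (m - 1)) := by
    ext j
    simp only [Finset.mem_filter, Finset.mem_Icc]
    omega
  rw [this, Nat.card_Icc]
  omega

lemma approx_bounds {C : ℝ} (hC : 0 < C) {k : ℕ} (hk : 0 < k) {y : ℝ} (hy : |y| ≤ C) :
    -C + (2 * C / k) * ((Finset.Icc 1 k).filter (fun j : ℕ => -C + 2 * C * j / k < y)).card ≤ y ∧
    y ≤ -C + (2 * C / k) * ((Finset.Icc 1 k).filter (fun j : ℕ => -C + 2 * C * j / k < y)).card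
      + 2 * C / k := by
  have hyC : -C ≤ y ∧ y ≤ C := abs_le.1 hy
  have hkR : (0 : ℝ) < (k : ℝ) := by exact_mod_cast hk
  set r : ℝ := (y + C) * k / (2 * C) with hr
  have hr0 : 0 ≤ r := by
    apply div_nonneg
    · nlinarith [hyC.1]
    · nlinarith
  have hcond : ∀ j : ℕ, (-C + 2 * C * j / k < y) ↔ (j < ⌈r⌉₊) := by
    intro j
    rw [Nat.lt_ceil, hr]
    rw [lt_div_iff₀ (by nlinarith : (0:ℝ) < 2 * C)]
    constructor
    · intro h
      have := (div_lt_iff₀ hkR).1 (by linarith : 2 * C * j / k < y + C)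
      nlinarith
    · intro h
      have h2 : 2 * C * j / k < y + C := (div_lt_iff₀ hkR).2 (by nlinarith)
      linarith
  have hfilter : ((Finset.Icc 1 k).filter (fun j : ℕ => -C + 2 * C * j / k < y))
      = (Finset.Icc 1 k).filter (fun j => j < ⌈r⌉₊) := by
    apply Finset.filter_congr
    intro j _
    simp only [hcond j]
  rw [hfilter, filter_card_eq]
  set s := min k (⌈r⌉₊ - 1) with hs
  have hsr : (s : ℝ) ≤ r := by
    rcases Nat.eq_zero_or_pos ⌈r⌉₊ with h0 | hpos
    · have : s = 0 := by omega
      rw [this]; exact_mod_cast hr0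
    · have h1 : (s : ℕ) ≤ ⌈r⌉₊ - 1 := min_le_right _ _
      have h2 : ((⌈r⌉₊ - 1 : ℕ) : ℝ) = (⌈r⌉₊ : ℝ) - 1 := by
        push_cast [Nat.cast_sub hpos]; ring
      have h3 : (⌈r⌉₊ : ℝ) < r + 1 := Nat.ceil_lt_add_one hr0
      have h4 : (s : ℝ) ≤ ((⌈r⌉₊ - 1 : ℕ) : ℝ) := by exact_mod_cast h1
      rw [h2] at h4; linarith
  have hrs : r ≤ (s : ℝ) + 1 := by
    rcases min_cases k (⌈r⌉₊ - 1) with ⟨heq, hle⟩ | ⟨heq, hlt⟩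
    · -- s = k
      have : r ≤ (k : ℝ) := by
        rw [hr, div_le_iff₀ (by nlinarith : (0:ℝ) < 2 * C)]
        nlinarith [hyC.2]
      rw [hs, heq]; linarith
    · -- s = ⌈r⌉₊ - 1
      have h1 : r ≤ (⌈r⌉₊ : ℝ) := Nat.le_ceil r
      have h2 : (⌈r⌉₊ : ℝ) ≤ ((⌈r⌉₊ - 1 : ℕ) : ℝ) + 1 := by
        rcases Nat.eq_zero_or_pos ⌈r⌉₊ with h0 | hpos
        · rw [h0]; simp
        · rw [Nat.cast_sub hpos]; simp
      rw [hs, heq]; linarith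
  have hy_eq : y + C = (2 * C / k) * r := by
    rw [hr]; field_simp
  constructor
  · have : (2 * C / k) * s ≤ (2 * C / k) * r := by
      apply mul_le_mul_of_nonneg_left hsr
      positivity
    linarith
  · have : (2 * C / k) * r ≤ (2 * C / k) * ((s : ℝ) + 1) := by
      apply mul_le_mul_of_nonneg_left hrs
      positivity
    have h2 : (2 * C / k) * ((s : ℝ) + 1) = (2 * C / k) * s + 2 * C / k := by ring
    linarith

lemma onestep_core {Ω : Type*} [m0 : MeasurableSpace Ω]
    (P : Measure Ω) [IsProbabilityMeasure P]
    {W : Ω → ℝ} (hWm : Measurable W)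
    {H : Ω → ℝ → ℝ} (hHmeas : Measurable (fun p : Ω × ℝ => H p.1 p.2))
    {C : ℝ} (hC : 0 < C) (hHbd : ∀ ω x, |H ω x| ≤ C)
    (hlevel : ∀ c : ℝ, (P {ω | c < H ω (W ω)}).toReal
      ≤ ∫ ω, (expMeasure 1 {x | c < H ω x}).toReal ∂P) :
    ∫ ω, H ω (W ω) ∂P ≤ ∫ ω, ∫ x, H ω x ∂(expMeasure 1) ∂P := by
  classical
  haveI : IsProbabilityMeasure (expMeasure 1) := isProbabilityMeasure_expMeasure one_pos
  set ν := expMeasure 1 with hνdef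
  have hf : Measurable (fun ω => H ω (W ω)) := hHmeas.comp (measurable_id.prodMk hWm)
  have hfint : Integrable (fun ω => H ω (W ω)) P := by
    refine (integrable_const C).mono' hf.aestronglyMeasurable (ae_of_all _ fun ω => ?_)
    simpa [Real.norm_eq_abs] using hHbd ω (W ω)
  have hHsec : ∀ ω, Measurable (fun x => H ω x) := fun ω =>
    hHmeas.comp measurable_prodMk_left
  have hHxint : ∀ ω, Integrable (fun x => H ω x) ν := fun ω =>
    (integrable_const C).mono' (hHsec ω).aestronglyMeasurable
      (ae_of_all _ fun x => by simpa [Real.norm_eq_abs] using hHbd ω x)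
  have hg_sm : StronglyMeasurable (fun ω => ∫ x, H ω x ∂ν) :=
    hHmeas.stronglyMeasurable.integral_prod_right'
  have hgint : Integrable (fun ω => ∫ x, H ω x ∂ν) P := by
    refine (integrable_const C).mono' hg_sm.aestronglyMeasurable (ae_of_all _ fun ω => ?_)
    rw [Real.norm_eq_abs]
    calc |∫ x, H ω x ∂ν| ≤ ∫ x, |H ω x| ∂ν := by
          simpa [Real.norm_eq_abs] using
            norm_integral_le_integral_norm (μ := ν) (f := fun x => H ω x)
      _ ≤ ∫ _x, C ∂ν := integral_mono (hHxint ω).abs (integrable_const C) fun x => hHbd ω x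
      _ = C := by simp
  have hmain : ∀ k : ℕ, 0 < k →
      ∫ ω, H ω (W ω) ∂P ≤ (∫ ω, ∫ x, H ω x ∂ν ∂P) + 2 * C / k := by
    intro k hk
    set c : ℕ → ℝ := fun j => -C + 2 * C * j / k with hc
    have hEmeas : ∀ j : ℕ, MeasurableSet {ω | c j < H ω (W ω)} := fun j =>
      hf measurableSet_Ioi
    have hAνmeas : ∀ j : ℕ, Measurable (fun ω => (ν {x | c j < H ω x}).toReal) := by
      intro j
      have hset : MeasurableSet {p : Ω × ℝ | c j < H p.1 p.2} := hHmeas measurableSet_Ioi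
      exact (measurable_measure_prodMk_left hset).ennreal_toReal
    have hAνint : ∀ j : ℕ, Integrable (fun ω => (ν {x | c j < H ω x}).toReal) P := by
      intro j
      refine (integrable_const (1:ℝ)).mono' (hAνmeas j).aestronglyMeasurable
        (ae_of_all _ fun ω => ?_)
      rw [Real.norm_eq_abs, abs_of_nonneg ENNReal.toReal_nonneg]
      calc (ν {x | c j < H ω x}).toReal ≤ (1 : ℝ≥0∞).toReal :=
            ENNReal.toReal_mono ENNReal.one_ne_top prob_le_one
        _ = 1 := rfl
    -- pointwise bound in ω
    have hptω : ∀ ω, H ω (W ω) ≤ (-C + 2 * C / k)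
        + ∑ j ∈ Finset.Icc 1 k,
            (2 * C / k) * ({ω' | c j < H ω' (W ω')}.indicator (fun _ => (1:ℝ)) ω) := by
      intro ω
      have hb := (approx_bounds hC hk (hHbd ω (W ω))).2
      have hsum : ∑ j ∈ Finset.Icc 1 k,
          (2 * C / k) * ({ω' | c j < H ω' (W ω')}.indicator (fun _ => (1:ℝ)) ω)
          = (2 * C / k) *
            ((Finset.Icc 1 k).filter (fun j : ℕ => -C + 2 * C * j / k < H ω (W ω))).card := by
        rw [← Finset.mul_sum]
        congr 1
        have heq : ∀ j ∈ Finset.Icc 1 k,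
            {ω' | c j < H ω' (W ω')}.indicator (fun _ => (1:ℝ)) ω
            = if -C + 2 * C * j / k < H ω (W ω) then (1:ℝ) else 0 := by
          intro j _
          simp [Set.indicator_apply, hc]
        rw [Finset.sum_congr rfl heq, Finset.sum_boole]
      rw [hsum]
      linarith
    have hindint : ∀ j : ℕ,
        Integrable (fun ω => (2 * C / k) *
          ({ω' | c j < H ω' (W ω')}.indicator (fun _ => (1:ℝ)) ω)) P := fun j =>
      (((integrable_const (1:ℝ)).indicator (hEmeas j)).const_mul _)
    have hstep2 : ∫ ω, H ω (W ω) ∂P ≤ (-C + 2 * C / k)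
        + ∑ j ∈ Finset.Icc 1 k, (2 * C / k) * (P {ω | c j < H ω (W ω)}).toReal := by
      have hint2 : Integrable (fun ω => (-C + 2 * C / k)
          + ∑ j ∈ Finset.Icc 1 k, (2 * C / k) *
            ({ω' | c j < H ω' (W ω')}.indicator (fun _ => (1:ℝ)) ω)) P :=
        (integrable_const _).add (integrable_finset_sum _ fun j _ => hindint j)
      calc ∫ ω, H ω (W ω) ∂P
          ≤ ∫ ω, ((-C + 2 * C / k) + ∑ j ∈ Finset.Icc 1 k, (2 * C / k) *
              ({ω' | c j < H ω' (W ω')}.indicator (fun _ => (1:ℝ)) ω)) ∂P :=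
            integral_mono hfint hint2 hptω
        _ = (-C + 2 * C / k)
            + ∑ j ∈ Finset.Icc 1 k, (2 * C / k) * (P {ω | c j < H ω (W ω)}).toReal := by
            rw [integral_add (integrable_const _) (integrable_finset_sum _ fun j _ => hindint j),
              integral_const, integral_finset_sum _ fun j _ => hindint j]
            simp only [probReal_univ, ENNReal.toReal_one, smul_eq_mul, one_mul]
            congr 1
            refine Finset.sum_congr rfl fun j _ => ?_
            rw [integral_const_mul, integral_indicator_const _ (hEmeas j)]
            simp [measureReal_def]
    have hstep3 : ∑ j ∈ Finset.Icc 1 k, (2 * C / k) * (P {ω | c j < H ω (W ω)}).toReal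
        ≤ ∑ j ∈ Finset.Icc 1 k, (2 * C / k) * ∫ ω, (ν {x | c j < H ω x}).toReal ∂P :=
      Finset.sum_le_sum fun j _ =>
        mul_le_mul_of_nonneg_left (hlevel (c j)) (by positivity)
    have hptx : ∀ ω,
        -C + ∑ j ∈ Finset.Icc 1 k, (2 * C / k) * (ν {x | c j < H ω x}).toReal
          ≤ ∫ x, H ω x ∂ν := by
      intro ω
      have hAmeas : ∀ j : ℕ, MeasurableSet {x | c j < H ω x} := fun j =>
        (hHsec ω) measurableSet_Ioi
      have hxind : ∀ j : ℕ,
          Integrable (fun x => (2 * C / k) *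
            ({x' | c j < H ω x'}.indicator (fun _ => (1:ℝ)) x)) ν := fun j =>
        (((integrable_const (1:ℝ)).indicator (hAmeas j)).const_mul _)
      have hψint : Integrable (fun x => -C + ∑ j ∈ Finset.Icc 1 k, (2 * C / k) *
          ({x' | c j < H ω x'}.indicator (fun _ => (1:ℝ)) x)) ν :=
        (integrable_const _).add (integrable_finset_sum _ fun j _ => hxind j)
      have hψle : ∀ x, -C + ∑ j ∈ Finset.Icc 1 k, (2 * C / k) *
          ({x' | c j < H ω x'}.indicator (fun _ => (1:ℝ)) x) ≤ H ω x := by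
        intro x
        have hb := (approx_bounds hC hk (hHbd ω x)).1
        have hsum : ∑ j ∈ Finset.Icc 1 k, (2 * C / k) *
            ({x' | c j < H ω x'}.indicator (fun _ => (1:ℝ)) x)
            = (2 * C / k) *
              ((Finset.Icc 1 k).filter (fun j : ℕ => -C + 2 * C * j / k < H ω x)).card := by
          rw [← Finset.mul_sum]
          congr 1
          have heq : ∀ j ∈ Finset.Icc 1 k,
              {x' | c j < H ω x'}.indicator (fun _ => (1:ℝ)) x
              = if -C + 2 * C * j / k < H ω x then (1:ℝ) else 0 := by
            intro j _
            simp [Set.indicator_apply, hc]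
          rw [Finset.sum_congr rfl heq, Finset.sum_boole]
        rw [hsum]
        linarith
      calc -C + ∑ j ∈ Finset.Icc 1 k, (2 * C / k) * (ν {x | c j < H ω x}).toReal
          = ∫ x, (-C + ∑ j ∈ Finset.Icc 1 k, (2 * C / k) *
              ({x' | c j < H ω x'}.indicator (fun _ => (1:ℝ)) x)) ∂ν := by
            rw [integral_add (integrable_const _) (integrable_finset_sum _ fun j _ => hxind j),
              integral_const, integral_finset_sum _ fun j _ => hxind j]
            simp only [probReal_univ, ENNReal.toReal_one, smul_eq_mul, one_mul]
            congr 1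
            refine Finset.sum_congr rfl fun j _ => ?_
            rw [integral_const_mul, integral_indicator_const _ (hAmeas j)]
            simp [measureReal_def]
        _ ≤ ∫ x, H ω x ∂ν := integral_mono hψint (hHxint ω) hψle
    have hstep4 : -C + ∑ j ∈ Finset.Icc 1 k,
        (2 * C / k) * ∫ ω, (ν {x | c j < H ω x}).toReal ∂P
          ≤ ∫ ω, ∫ x, H ω x ∂ν ∂P := by
      have hintsum : Integrable (fun ω => -C + ∑ j ∈ Finset.Icc 1 k,
          (2 * C / k) * (ν {x | c j < H ω x}).toReal) P :=
        (integrable_const _).add (integrable_finset_sum _ fun j _ => (hAνint j).const_mul _)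
      calc -C + ∑ j ∈ Finset.Icc 1 k, (2 * C / k) * ∫ ω, (ν {x | c j < H ω x}).toReal ∂P
          = ∫ ω, (-C + ∑ j ∈ Finset.Icc 1 k,
              (2 * C / k) * (ν {x | c j < H ω x}).toReal) ∂P := by
            rw [integral_add (integrable_const _)
              (integrable_finset_sum _ fun j _ => (hAνint j).const_mul _),
              integral_const, integral_finset_sum _ fun j _ => (hAνint j).const_mul _]
            simp only [probReal_univ, ENNReal.toReal_one, smul_eq_mul, one_mul]
            congr 1
            exact Finset.sum_congr rfl fun j _ => (integral_const_mul _ _).symm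
        _ ≤ ∫ ω, ∫ x, H ω x ∂ν ∂P := integral_mono hintsum hgint hptx
    linarith
  refine le_of_forall_pos_le_add fun ε hε => ?_
  set k : ℕ := max 1 ⌈2 * C / ε⌉₊ with hkdef
  have hk : 0 < k := lt_of_lt_of_le one_pos (le_max_left _ _)
  have hkR : (0 : ℝ) < (k : ℝ) := by exact_mod_cast hk
  have hkup : 2 * C / ε ≤ (k : ℝ) := by
    calc 2 * C / ε ≤ (⌈2 * C / ε⌉₊ : ℝ) := Nat.le_ceil _
      _ ≤ (k : ℝ) := by exact_mod_cast le_max_right 1 ⌈2 * C / ε⌉₊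
  have hfrac : 2 * C / (k : ℝ) ≤ ε := by
    rw [div_le_iff₀ hkR]
    have := (div_le_iff₀ hε).1 hkup
    linarith
  calc ∫ ω, H ω (W ω) ∂P ≤ (∫ ω, ∫ x, H ω x ∂ν ∂P) + 2 * C / k := hmain k hk
    _ ≤ (∫ ω, ∫ x, H ω x ∂ν ∂P) + ε := by linarith

lemma onestep_mono {Ω : Type*} {G : MeasurableSpace Ω} [m0 : MeasurableSpace Ω]
    (P : Measure Ω) [IsProbabilityMeasure P] (hG : G ≤ m0)
    {W : Ω → ℝ} (hWm : Measurable W) (hW0 : ∀ ω, 0 ≤ W ω)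
    (hdom : ∀ t : ℝ, 0 ≤ t → ∀ᵐ ω ∂P,
      (P[Set.indicator {ω' | t < W ω'} (fun _ => (1 : ℝ)) | G]) ω ≤ Real.exp (-t))
    {H : Ω → ℝ → ℝ}
    (hHmeasG : Measurable[G.prod (inferInstance : MeasurableSpace ℝ)]
      (fun p : Ω × ℝ => H p.1 p.2))
    (hmono : ∀ ω, Monotone (H ω))
    {C : ℝ} (hC : 0 < C) (hHbd : ∀ ω x, |H ω x| ≤ C) :
    ∫ ω, H ω (W ω) ∂P ≤ ∫ ω, ∫ x, H ω x ∂(expMeasure 1) ∂P := by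
  haveI : IsProbabilityMeasure (expMeasure 1) := isProbabilityMeasure_expMeasure one_pos
  have hprodle : (G.prod (inferInstance : MeasurableSpace ℝ)) ≤
      (m0.prod (inferInstance : MeasurableSpace ℝ)) :=
    sup_le_sup_right (MeasurableSpace.comap_mono hG) _
  have hHmeas : Measurable (fun p : Ω × ℝ => H p.1 p.2) := hHmeasG.mono hprodle le_rfl
  refine onestep_core P hWm hHmeas hC hHbd fun c => ?_
  have hAset : MeasurableSet[G.prod (inferInstance : MeasurableSpace ℝ)]
      {p : Ω × ℝ | p.2 ∈ {x | c < H p.1 x}} := by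
    have : {p : Ω × ℝ | p.2 ∈ {x | c < H p.1 x}} = (fun p : Ω × ℝ => H p.1 p.2) ⁻¹' Set.Ioi c :=
      rfl
    rw [this]
    exact hHmeasG measurableSet_Ioi
  have hupper : ∀ ω : Ω, ∀ x ∈ {x | c < H ω x}, ∀ y, x ≤ y → y ∈ {x | c < H ω x} := by
    intro ω x hx y hxy
    exact lt_of_lt_of_le hx (hmono ω hxy)
  have hkey := upper_le P hG hWm hW0 hdom (fun ω => {x | c < H ω x}) hAset hupper
  have hfin : ∫⁻ ω, expMeasure 1 {x | c < H ω x} ∂P ≠ ∞ := by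
    refine ne_of_lt (lt_of_le_of_lt (lintegral_mono fun ω => prob_le_one) ?_)
    rw [lintegral_one, measure_univ]
    exact ENNReal.one_lt_top
  have hmeasν : Measurable (fun ω => expMeasure 1 {x | c < H ω x}) := by
    have hset : MeasurableSet {p : Ω × ℝ | c < H p.1 p.2} := hHmeas measurableSet_Ioi
    exact measurable_measure_prodMk_left hset
  have heq : ∫ ω, (expMeasure 1 {x | c < H ω x}).toReal ∂P
      = (∫⁻ ω, expMeasure 1 {x | c < H ω x} ∂P).toReal :=
    integral_toReal hmeasν.aemeasurable
      (ae_of_all _ fun ω => lt_of_le_of_lt prob_le_one ENNReal.one_lt_top)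
  rw [heq]
  exact ENNReal.toReal_mono hfin hkey

lemma onestep_anti {Ω : Type*} {G : MeasurableSpace Ω} [m0 : MeasurableSpace Ω]
    (P : Measure Ω) [IsProbabilityMeasure P] (hG : G ≤ m0)
    {W : Ω → ℝ} (hWm : Measurable W) (hW0 : ∀ ω, 0 ≤ W ω)
    (hdom : ∀ t : ℝ, 0 ≤ t → ∀ᵐ ω ∂P,
      Real.exp (-t) ≤ (P[Set.indicator {ω' | t < W ω'} (fun _ => (1 : ℝ)) | G]) ω)
    {H : Ω → ℝ → ℝ}
    (hHmeasG : Measurable[G.prod (inferInstance : MeasurableSpace ℝ)]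
      (fun p : Ω × ℝ => H p.1 p.2))
    (hanti : ∀ ω, Antitone (H ω))
    {C : ℝ} (hC : 0 < C) (hHbd : ∀ ω x, |H ω x| ≤ C) :
    ∫ ω, H ω (W ω) ∂P ≤ ∫ ω, ∫ x, H ω x ∂(expMeasure 1) ∂P := by
  haveI : IsProbabilityMeasure (expMeasure 1) := isProbabilityMeasure_expMeasure one_pos
  set ν := expMeasure 1 with hνdef
  have hprodle : (G.prod (inferInstance : MeasurableSpace ℝ)) ≤
      (m0.prod (inferInstance : MeasurableSpace ℝ)) :=
    sup_le_sup_right (MeasurableSpace.comap_mono hG) _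
  have hHmeas : Measurable (fun p : Ω × ℝ => H p.1 p.2) := hHmeasG.mono hprodle le_rfl
  have hf : Measurable (fun ω => H ω (W ω)) := hHmeas.comp (measurable_id.prodMk hWm)
  refine onestep_core P hWm hHmeas hC hHbd fun c => ?_
  -- upper set: complement
  have hAset : MeasurableSet[G.prod (inferInstance : MeasurableSpace ℝ)]
      {p : Ω × ℝ | p.2 ∈ {x | H p.1 x ≤ c}} := by
    have : {p : Ω × ℝ | p.2 ∈ {x | H p.1 x ≤ c}} = (fun p : Ω × ℝ => H p.1 p.2) ⁻¹' Set.Iic c :=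
      rfl
    rw [this]
    exact hHmeasG measurableSet_Iic
  have hupper : ∀ ω : Ω, ∀ x ∈ {x | H ω x ≤ c}, ∀ y, x ≤ y → y ∈ {x | H ω x ≤ c} := by
    intro ω x hx y hxy
    exact le_trans (hanti ω hxy) hx
  have hkey := upper_ge P hG hWm hW0 hdom (fun ω => {x | H ω x ≤ c}) hAset hupper
  have hmeasν : Measurable (fun ω => ν {x | H ω x ≤ c}) := by
    have hset : MeasurableSet {p : Ω × ℝ | H p.1 p.2 ≤ c} := hHmeas measurableSet_Iic
    exact measurable_measure_prodMk_left hset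
  have hfin : ∫⁻ ω, ν {x | H ω x ≤ c} ∂P ≠ ∞ := by
    refine ne_of_lt (lt_of_le_of_lt (lintegral_mono fun ω => prob_le_one) ?_)
    rw [lintegral_one, measure_univ]
    exact ENNReal.one_lt_top
  have hint_le : ∫ ω, (ν {x | H ω x ≤ c}).toReal ∂P ≤ (P {ω | H ω (W ω) ≤ c}).toReal := by
    have heq : ∫ ω, (ν {x | H ω x ≤ c}).toReal ∂P
        = (∫⁻ ω, ν {x | H ω x ≤ c} ∂P).toReal :=
      integral_toReal hmeasν.aemeasurable
        (ae_of_all _ fun ω => lt_of_le_of_lt prob_le_one ENNReal.one_lt_top)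
    rw [heq]
    exact ENNReal.toReal_mono (measure_ne_top _ _) hkey
  -- complements
  have hPsplit : (P {ω | H ω (W ω) ≤ c}).toReal + (P {ω | c < H ω (W ω)}).toReal = 1 := by
    have hmeasE : MeasurableSet {ω | H ω (W ω) ≤ c} := hf measurableSet_Iic
    have hcompl : {ω | c < H ω (W ω)} = {ω | H ω (W ω) ≤ c}ᶜ := by
      ext ω; simp [not_le]
    rw [hcompl, ← ENNReal.toReal_add (measure_ne_top _ _) (measure_ne_top _ _),
      measure_add_measure_compl hmeasE]
    simp
  have hνsplit : ∀ ω, (ν {x | H ω x ≤ c}).toReal + (ν {x | c < H ω x}).toReal = 1 := by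
    intro ω
    have hmeasE : MeasurableSet {x | H ω x ≤ c} :=
      (hHmeas.comp measurable_prodMk_left) measurableSet_Iic
    have hcompl : {x | c < H ω x} = {x | H ω x ≤ c}ᶜ := by
      ext x; simp [not_le]
    rw [hcompl, ← ENNReal.toReal_add (measure_ne_top _ _) (measure_ne_top _ _),
      measure_add_measure_compl hmeasE]
    simp
  -- integrability pieces
  have hνmeas2 : Measurable (fun ω => (ν {x | c < H ω x}).toReal) := by
    have hset : MeasurableSet {p : Ω × ℝ | c < H p.1 p.2} := hHmeas measurableSet_Ioi
    exact (measurable_measure_prodMk_left hset).ennreal_toReal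
  have hνint1 : Integrable (fun ω => (ν {x | H ω x ≤ c}).toReal) P := by
    refine (integrable_const (1:ℝ)).mono' hmeasν.ennreal_toReal.aestronglyMeasurable
      (ae_of_all _ fun ω => ?_)
    rw [Real.norm_eq_abs, abs_of_nonneg ENNReal.toReal_nonneg]
    calc (ν {x | H ω x ≤ c}).toReal ≤ (1 : ℝ≥0∞).toReal :=
          ENNReal.toReal_mono ENNReal.one_ne_top prob_le_one
      _ = 1 := rfl
  have hintegral_eq : ∫ ω, (ν {x | c < H ω x}).toReal ∂P
      = 1 - ∫ ω, (ν {x | H ω x ≤ c}).toReal ∂P := by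
    have : ∀ ω, (ν {x | c < H ω x}).toReal = 1 - (ν {x | H ω x ≤ c}).toReal := by
      intro ω; linarith [hνsplit ω]
    rw [integral_congr_ae (ae_of_all _ this), integral_sub (integrable_const 1) hνint1,
      integral_const]
    simp
  rw [hintegral_eq]
  linarith [hint_le, hPsplit]


lemma measurable_update_snd {ι : Type*} [Fintype ι] [DecidableEq ι] (i0 : ι) :
    Measurable (fun p : ℝ × (ι → ℝ) => Function.update p.2 i0 p.1) := by
  rw [measurable_pi_iff]
  intro j
  by_cases h : j = i0
  · subst h
    simp only [Function.update_self]
    exact measurable_fst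
  · simp only [Function.update_of_ne h]
    exact (measurable_pi_apply j).comp measurable_snd

lemma map_update_pi {ι : Type*} [Fintype ι] [DecidableEq ι]
    (μ : ι → Measure ℝ) [∀ i, IsProbabilityMeasure (μ i)] (i0 : ι) :
    Measure.map (fun p : ℝ × (ι → ℝ) => Function.update p.2 i0 p.1)
      ((μ i0).prod (Measure.pi μ)) = Measure.pi μ := by
  refine (Measure.pi_eq fun s hs => ?_).symm
  rw [Measure.map_apply (measurable_update_snd i0) (MeasurableSet.univ_pi hs)]
  have hpre : (fun p : ℝ × (ι → ℝ) => Function.update p.2 i0 p.1) ⁻¹' (univ.pi s)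
      = (s i0) ×ˢ (univ.pi (Function.update s i0 univ)) := by
    ext ⟨x, v⟩
    simp only [Set.mem_preimage, Set.mem_pi, Set.mem_univ, forall_true_left, Set.mem_prod]
    constructor
    · intro h
      refine ⟨by simpa using h i0, fun j => ?_⟩
      by_cases hj : j = i0
      · subst hj; simp
      · have := h j
        simpa [Function.update_of_ne hj] using this
    · rintro ⟨h1, h2⟩ j
      by_cases hj : j = i0
      · subst hj; simpa using h1
      · have := h2 j
        simpa [Function.update_of_ne hj] using this
  rw [hpre, Measure.prod_prod, Measure.pi_pi]
  rw [← Finset.prod_mul_prod_compl {i0}ᶜ]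
  have h1 : ∏ i ∈ {i0}ᶜ, μ i (Function.update s i0 univ i)
      = ∏ i ∈ {i0}ᶜ, μ i (s i) := by
    refine Finset.prod_congr rfl fun i hi => ?_
    rw [Function.update_of_ne (by simpa using hi)]
  have h2 : ∏ i ∈ ({i0}ᶜ)ᶜ, μ i (Function.update s i0 univ i) = 1 := by
    simp
  rw [h1, h2, mul_one]
  rw [← Finset.prod_mul_prod_compl {i0}ᶜ (fun i => μ i (s i))]
  have h3 : ∏ i ∈ ({i0}ᶜ)ᶜ, μ i (s i) = μ i0 (s i0) := by simp
  rw [h3, mul_comm]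

end Stmt10Aux

open Stmt10Aux

/-- (Inequality (20)) Let `W_1, …, W_{2n−1}` be nonnegative random variables adapted to
an increasing family of σ-algebras `G`, such that the conditional law of each
even-indexed variable (the `X`'s) given the past is stochastically dominated by the
exponential(1) law, and the conditional law of each odd-indexed variable (the `Y`'s)
stochastically dominates it.  Then for every bounded measurable `F` that is increasing
in the even coordinates and decreasing in the odd coordinates,
`E F(W_1, …, W_{2n−1}) ≤ E F(Z_1, …, Z_{2n−1})` where the `Z_i` are i.i.d.
exponential(1). -/
theorem stmt_10 {Ω : Type*} [m0 : MeasurableSpace Ω] (P : Measure Ω)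
    [IsProbabilityMeasure P] (n : ℕ) (hn : 0 < n)
    (G : ℕ → MeasurableSpace Ω) (hGmono : Monotone G) (hGle : ∀ i, G i ≤ m0)
    (W : Fin (2 * n - 1) → Ω → ℝ)
    (hWpos : ∀ i ω, 0 ≤ W i ω)
    (hWadapted : ∀ i : Fin (2 * n - 1), Measurable[G ((i : ℕ) + 1)] (W i))
    (hdomX : ∀ i : Fin (2 * n - 1), (i : ℕ) % 2 = 0 → ∀ t : ℝ, 0 ≤ t →
      ∀ᵐ ω ∂P,
        (P[Set.indicator {ω' | t < W i ω'} (fun _ => (1 : ℝ)) | G i]) ω ≤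
          Real.exp (-t))
    (hdomY : ∀ i : Fin (2 * n - 1), (i : ℕ) % 2 = 1 → ∀ t : ℝ, 0 ≤ t →
      ∀ᵐ ω ∂P,
        Real.exp (-t) ≤
          (P[Set.indicator {ω' | t < W i ω'} (fun _ => (1 : ℝ)) | G i]) ω)
    (F : (Fin (2 * n - 1) → ℝ) → ℝ) (hFmeas : Measurable F)
    (hFbdd : ∃ C : ℝ, ∀ v, |F v| ≤ C)
    (hFmono : ∀ i : Fin (2 * n - 1), (i : ℕ) % 2 = 0 →
      ∀ (v : Fin (2 * n - 1) → ℝ) (s t : ℝ), s ≤ t →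
        F (Function.update v i s) ≤ F (Function.update v i t))
    (hFanti : ∀ i : Fin (2 * n - 1), (i : ℕ) % 2 = 1 →
      ∀ (v : Fin (2 * n - 1) → ℝ) (s t : ℝ), s ≤ t →
        F (Function.update v i t) ≤ F (Function.update v i s)) :
    ∫ ω, F (fun i => W i ω) ∂P ≤
      ∫ v, F v ∂(Measure.pi fun _ : Fin (2 * n - 1) => expMeasure 1) := by
  classical
  haveI : IsProbabilityMeasure (expMeasure 1) := isProbabilityMeasure_expMeasure one_pos
  set ν : Measure ℝ := expMeasure 1 with hν
  set Pi : Measure (Fin (2 * n - 1) → ℝ) := Measure.pi fun _ : Fin (2 * n - 1) => ν with hPi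
  haveI : IsProbabilityMeasure Pi := by rw [hPi]; infer_instance
  obtain ⟨C₀, hC₀⟩ := hFbdd
  set C : ℝ := C₀ + 1 with hCdef
  have hCpos : 0 < C := by
    have h1 : (0:ℝ) ≤ |F 0| := abs_nonneg _
    have h2 := hC₀ 0
    rw [hCdef]; linarith
  have hFC : ∀ v, |F v| ≤ C := fun v => le_trans (hC₀ v) (by rw [hCdef]; linarith)
  set merge : ℕ → Ω → (Fin (2 * n - 1) → ℝ) → (Fin (2 * n - 1) → ℝ) :=
    fun k ω v i => if (i : ℕ) < k then W i ω else v i with hmerge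
  have hmergeMeasV : ∀ k ω, Measurable (fun v => merge k ω v) := by
    intro k ω
    rw [measurable_pi_iff]
    intro i
    by_cases hik : (i : ℕ) < k
    · simp only [hmerge, if_pos hik]; exact measurable_const
    · simp only [hmerge, if_neg hik]; exact measurable_pi_apply i
  have hintV : ∀ (φ : (Fin (2 * n - 1) → ℝ) → (Fin (2 * n - 1) → ℝ)), Measurable φ →
      Integrable (fun v => F (φ v)) Pi := fun φ hφ =>
    (integrable_const C).mono' (hFmeas.comp hφ).aestronglyMeasurable
      (ae_of_all _ fun v => by simpa [Real.norm_eq_abs] using hFC (φ v))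
  set J : ℕ → ℝ := fun k => ∫ ω, ∫ v, F (merge k ω v) ∂Pi ∂P with hJ
  -- endpoints
  have hJm : J (2 * n - 1) = ∫ ω, F (fun i => W i ω) ∂P := by
    simp only [hJ]
    congr 1
    funext ω
    have : (fun v => F (merge (2 * n - 1) ω v)) = fun _ => F (fun i => W i ω) := by
      funext v
      congr 1
      funext i
      simp only [hmerge, if_pos i.isLt]
    rw [this, integral_const]
    simp
  have hJ0 : J 0 = ∫ v, F v ∂Pi := by
    simp only [hJ]
    have h1 : (fun ω => ∫ v, F (merge 0 ω v) ∂Pi) = fun _ω => ∫ v, F v ∂Pi := by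
      funext ω
      have h2 : ∀ v : Fin (2 * n - 1) → ℝ, merge 0 ω v = v := by
        intro v; funext i; simp [hmerge]
      simp only [h2]
    rw [h1, integral_const]
    simp
  -- one-step inequalities
  have hstep : ∀ k, J (k + 1) ≤ J k := by
    intro k
    by_cases hk : k < 2 * n - 1
    case neg =>
      have : merge (k + 1) = merge k := by
        funext ω v i
        have : (i : ℕ) < 2 * n - 1 := i.isLt
        simp only [hmerge]
        have h2 : (i : ℕ) < k := by omega
        have h3 : (i : ℕ) < k + 1 := by omega
        rw [if_pos h2, if_pos h3]
      simp only [hJ, this]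
      exact le_refl _
    case pos =>
      set i0 : Fin (2 * n - 1) := ⟨k, hk⟩ with hi0
      have hGkle : G k ≤ m0 := hGle k
      have hWpast : ∀ i : Fin (2 * n - 1), (i : ℕ) < k → Measurable[G k] (W i) := by
        intro i hi
        exact (hWadapted i).mono (hGmono (by omega)) le_rfl
      have hWi0m : Measurable (W i0) := (hWadapted i0).mono (hGle _) le_rfl
      set H : Ω → ℝ → ℝ := fun ω x => ∫ v, F (Function.update (merge k ω v) i0 x) ∂Pi with hH
      -- measurability of the parametrized update
      letI mOR : MeasurableSpace (Ω × ℝ) := (G k).prod (inferInstance : MeasurableSpace ℝ)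
      have hq : Measurable
          (fun p : (Ω × ℝ) × (Fin (2 * n - 1) → ℝ) => Function.update (merge k p.1.1 p.2) i0 p.1.2) := by
        rw [measurable_pi_iff]
        intro i
        by_cases hii : i = i0
        · subst hii
          have heq : (fun p : (Ω × ℝ) × (Fin (2 * n - 1) → ℝ) =>
              Function.update (merge k p.1.1 p.2) i0 p.1.2 i0) = fun p => p.1.2 := by
            funext p; rw [Function.update_self]
          rw [heq]
          exact measurable_snd.comp measurable_fst
        · have hupd : (fun p : (Ω × ℝ) × (Fin (2 * n - 1) → ℝ) =>
              Function.update (merge k p.1.1 p.2) i0 p.1.2 i) =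
              fun p => merge k p.1.1 p.2 i := by
            funext p; rw [Function.update_of_ne hii]
          rw [hupd]
          by_cases hik : (i : ℕ) < k
          · have heq : (fun p : (Ω × ℝ) × (Fin (2 * n - 1) → ℝ) => merge k p.1.1 p.2 i) =
                fun p => W i p.1.1 := by
              funext p; simp only [hmerge, if_pos hik]
            rw [heq]
            exact (hWpast i hik).comp (measurable_fst.comp measurable_fst)
          · have heq : (fun p : (Ω × ℝ) × (Fin (2 * n - 1) → ℝ) => merge k p.1.1 p.2 i) =
                fun p => p.2 i := by
              funext p; simp only [hmerge, if_neg hik]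
            rw [heq]
            exact (measurable_pi_apply i).comp measurable_snd
      have hHmeasG : Measurable (fun p : Ω × ℝ => H p.1 p.2) := by
        have h2 : StronglyMeasurable
            (fun p : (Ω × ℝ) × (Fin (2 * n - 1) → ℝ) =>
              F (Function.update (merge k p.1.1 p.2) i0 p.1.2)) :=
          (hFmeas.comp hq).stronglyMeasurable
        exact h2.integral_prod_right'.measurable
      have hHbd : ∀ ω x, |H ω x| ≤ C := by
        intro ω x
        rw [hH]
        calc |∫ v, F (Function.update (merge k ω v) i0 x) ∂Pi|
            ≤ ∫ v, |F (Function.update (merge k ω v) i0 x)| ∂Pi := by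
              simpa [Real.norm_eq_abs] using norm_integral_le_integral_norm (μ := Pi)
                (f := fun v => F (Function.update (merge k ω v) i0 x))
          _ ≤ ∫ _v, C ∂Pi := by
              refine integral_mono ?_ (integrable_const C) fun v => hFC _
              have hφ : Measurable (fun v => Function.update (merge k ω v) i0 x) := by
                rw [measurable_pi_iff]
                intro i
                by_cases hii : i = i0
                · subst hii; simp only [Function.update_self]; exact measurable_const
                · simp only [Function.update_of_ne hii]
                  exact (measurable_pi_apply i).comp (hmergeMeasV k ω)
              exact (hintV _ hφ).abs
          _ = C := by simp
      have hupdint : ∀ ω x, Integrable (fun v => F (Function.update (merge k ω v) i0 x)) Pi := by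
        intro ω x
        have hφ : Measurable (fun v => Function.update (merge k ω v) i0 x) := by
          rw [measurable_pi_iff]
          intro i
          by_cases hii : i = i0
          · subst hii; simp only [Function.update_self]; exact measurable_const
          · simp only [Function.update_of_ne hii]
            exact (measurable_pi_apply i).comp (hmergeMeasV k ω)
        exact hintV _ hφ
      -- identification of endpoints
      have hJk1 : J (k + 1) = ∫ ω, H ω (W i0 ω) ∂P := by
        simp only [hJ, hH]
        congr 1
        funext ω
        congr 1
        funext v
        congr 1
        funext i
        by_cases hii : i = i0
        · subst hii
          rw [Function.update_self]
          simp only [hmerge, hi0]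
          rw [if_pos (Nat.lt_succ_self k : ((⟨k, hk⟩ : Fin (2 * n - 1)) : ℕ) < k + 1)]
        · rw [Function.update_of_ne hii]
          have hik : (i : ℕ) ≠ k := by
            intro hcon
            exact hii (Fin.ext hcon)
          simp only [hmerge]
          by_cases hik2 : (i : ℕ) < k
          · rw [if_pos hik2, if_pos (by omega : (i : ℕ) < k + 1)]
          · rw [if_neg hik2, if_neg (by omega : ¬ (i : ℕ) < k + 1)]
      have hJk : ∫ ω, ∫ x, H ω x ∂ν ∂P = J k := by
        simp only [hJ]
        congr 1
        funext ω
        have hφm : Measurable (fun v => F (merge k ω v)) := hFmeas.comp (hmergeMeasV k ω)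
        have hmergeup : ∀ (x : ℝ) (v : Fin (2 * n - 1) → ℝ),
            merge k ω (Function.update v i0 x) = Function.update (merge k ω v) i0 x := by
          intro x v
          funext i
          by_cases hii : i = i0
          · subst hii
            rw [Function.update_self]
            simp only [hmerge]
            rw [if_neg (lt_irrefl k : ¬ ((⟨k, hk⟩ : Fin (2 * n - 1)) : ℕ) < k), Function.update_self]
          · rw [Function.update_of_ne hii]
            simp only [hmerge]
            by_cases hik : (i : ℕ) < k
            · rw [if_pos hik, if_pos hik]
            · rw [if_neg hik, if_neg hik, Function.update_of_ne hii]
        have hPiMap : Measure.map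
            (fun p : ℝ × (Fin (2 * n - 1) → ℝ) => Function.update p.2 i0 p.1)
            (ν.prod Pi) = Pi := by
          rw [hPi, hν]
          exact map_update_pi (fun _ : Fin (2 * n - 1) => expMeasure 1) i0
        have hasm : AEStronglyMeasurable (fun v => F (merge k ω v))
            (Measure.map (fun p : ℝ × (Fin (2 * n - 1) → ℝ) => Function.update p.2 i0 p.1)
              (ν.prod Pi)) := by
          rw [hPiMap]
          exact (hFmeas.comp (hmergeMeasV k ω)).aestronglyMeasurable
        have hintprod : Integrable
            (fun p : ℝ × (Fin (2 * n - 1) → ℝ) => F (merge k ω (Function.update p.2 i0 p.1)))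
            (ν.prod Pi) := by
          refine (integrable_const C).mono' ?_ (ae_of_all _ fun p => ?_)
          · exact ((hFmeas.comp (hmergeMeasV k ω)).comp
              (measurable_update_snd i0)).aestronglyMeasurable
          · simpa [Real.norm_eq_abs] using hFC _
        calc ∫ x, H ω x ∂ν
            = ∫ x, ∫ v, F (merge k ω (Function.update v i0 x)) ∂Pi ∂ν := by
              simp only [hH]
              congr 1
              funext x
              congr 1
              funext v
              rw [hmergeup]
          _ = ∫ p : ℝ × (Fin (2 * n - 1) → ℝ),
                F (merge k ω (Function.update p.2 i0 p.1)) ∂(ν.prod Pi) :=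
              (integral_prod _ hintprod).symm
          _ = ∫ v, F (merge k ω v)
                ∂(Measure.map (fun p : ℝ × (Fin (2 * n - 1) → ℝ) => Function.update p.2 i0 p.1)
                    (ν.prod Pi)) :=
              (integral_map (measurable_update_snd i0).aemeasurable hasm).symm
          _ = ∫ v, F (merge k ω v) ∂Pi := by rw [hPiMap]
      -- apply the one-step lemma
      rw [hJk1, ← hJk]
      rcases Nat.even_or_odd k with hke | hko
      · have hpar : ((i0 : ℕ)) % 2 = 0 := by
          simpa using Nat.even_iff.mp hke
        have hdom' := hdomX i0 hpar
        have hmono : ∀ ω, Monotone (H ω) := by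
          intro ω a b hab
          simp only [hH]
          exact integral_mono (hupdint ω a) (hupdint ω b)
            fun v => hFmono i0 hpar (merge k ω v) a b hab
        exact onestep_mono P hGkle hWi0m (hWpos i0) hdom' hHmeasG hmono hCpos hHbd
      · have hpar : ((i0 : ℕ)) % 2 = 1 := by
          simpa using Nat.odd_iff.mp hko
        have hdom' := hdomY i0 hpar
        have hanti : ∀ ω, Antitone (H ω) := by
          intro ω a b hab
          simp only [hH]
          exact integral_mono (hupdint ω b) (hupdint ω a)
            fun v => hFanti i0 hpar (merge k ω v) a b hab
        exact onestep_anti P hGkle hWi0m (hWpos i0) hdom' hHmeasG hanti hCpos hHbd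
  have hchain : ∀ k, J k ≤ J 0 := by
    intro k
    induction k with
    | zero => exact le_refl _
    | succ k ih => exact le_trans (hstep k) ih
  calc ∫ ω, F (fun i => W i ω) ∂P = J (2 * n - 1) := hJm.symm
    _ ≤ J 0 := hchain _
    _ = ∫ v, F v ∂Pi := hJ0
end

section
/- Sandwich implies exchangeability: let μ be a probability measure on X = {0,1}^{ℤ^d} such that for every δ > 0 there exist r, reals 0 = a_0 < a_1 < ⋯ < a_r = 1 with a_i − a_{i−1} < δ, and nonnegative λ_1,…,λ_r summing to 1 such that Σ_i λ_i ν_{a_{i−1}} ≤ μ ≤ Σ_i λ_i ν_{a_i} (stochastic domination with respect to the coordinatewise order). Then μ is exchangeable: for any two finite sets A, B ⊆ ℤ^d with Card(A) = Card(B), μ({η : ∏_{x∈A} η(x) = 1}) = μ({η : ∏_{x∈B} η(x) = 1}). -/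
open MeasureTheory
open scoped ENNReal

/-- The cylinder event `{η : all sites of A are occupied}` in `X = {0,1}^{ℤ^d}`. -/
def cylEvent (d : ℕ) (A : Finset (Fin d → ℤ)) : Set ((Fin d → ℤ) → Bool) :=
  {η | ∀ x ∈ A, η x = true}

/-- Stochastic domination of probability measures with respect to the coordinatewise
order: `μ ≤ ν` iff `∫ f dμ ≤ ∫ f dν` for every bounded measurable increasing `f`. -/
def StochDom {X : Type*} [MeasurableSpace X] [Preorder X] (μ ν : Measure X) : Prop :=
  ∀ f : X → ℝ, Measurable f → Monotone f → (∃ C : ℝ, ∀ x, |f x| ≤ C) →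
    ∫ x, f x ∂μ ≤ ∫ x, f x ∂ν

lemma cylEvent_measurable (d : ℕ) (A : Finset (Fin d → ℤ)) :
    MeasurableSet (cylEvent d A) := by
  have : cylEvent d A = ⋂ x ∈ (A : Set (Fin d → ℤ)), ((fun η => η x) ⁻¹' {true}) := by
    ext η; simp [cylEvent]
  rw [this]
  exact MeasurableSet.biInter A.countable_toSet
    (fun x _ => (measurable_pi_apply x) (measurableSet_singleton true))

lemma pow_diff_le (n : ℕ) {a b : ℝ} (hb : 0 ≤ b) (hba : b ≤ a) (ha : a ≤ 1) :
    a ^ n - b ^ n ≤ n * (a - b) := by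
  induction n with
  | zero => simp
  | succ k ih =>
    have hak : a ^ k ≤ 1 := pow_le_one₀ (hb.trans hba) ha
    have hbk : 0 ≤ b ^ k := pow_nonneg hb k
    have h1 : a ^ (k + 1) - b ^ (k + 1) = a * (a ^ k - b ^ k) + (a - b) * b ^ k := by ring
    have hs : 0 ≤ a ^ k - b ^ k := sub_nonneg.mpr (pow_le_pow_left₀ hb hba k)
    have h2 : a * (a ^ k - b ^ k) ≤ a ^ k - b ^ k := mul_le_of_le_one_left hs ha
    have h3 : (a - b) * b ^ k ≤ (a - b) * 1 :=
      mul_le_mul_of_nonneg_left (pow_le_one₀ hb (hba.trans ha)) (sub_nonneg.mpr hba)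
    push_cast
    linarith

/-- Sandwich implies exchangeability: if for every `δ > 0` the measure `μ` on
`X = {0,1}^{ℤ^d}` can be sandwiched `Σ λ_i ν_{a_{i-1}} ≤ μ ≤ Σ λ_i ν_{a_i}`
(stochastic domination) with mesh `a_i - a_{i-1} < δ`, where `ν_ρ` is the Bernoulli
product measure of density `ρ`, then `μ` is exchangeable. -/
theorem stmt_19 (d : ℕ) (μ : Measure ((Fin d → ℤ) → Bool)) [IsProbabilityMeasure μ]
    (ν : ℝ → Measure ((Fin d → ℤ) → Bool))
    (hνprob : ∀ ρ : ℝ, 0 ≤ ρ → ρ ≤ 1 → IsProbabilityMeasure (ν ρ))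
    (hνcyl : ∀ ρ : ℝ, 0 ≤ ρ → ρ ≤ 1 → ∀ A : Finset (Fin d → ℤ),
      ν ρ (cylEvent d A) = ENNReal.ofReal (ρ ^ A.card))
    (hsand : ∀ δ : ℝ, 0 < δ → ∃ r : ℕ, 0 < r ∧ ∃ a : ℕ → ℝ, ∃ lam : ℕ → ℝ,
      a 0 = 0 ∧ a r = 1 ∧ (∀ i, i < r → a i < a (i + 1)) ∧
      (∀ i, 1 ≤ i → i ≤ r → a i - a (i - 1) < δ) ∧
      (∀ i, 0 ≤ lam i) ∧ (∑ i ∈ Finset.Icc 1 r, lam i = 1) ∧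
      StochDom (∑ i ∈ Finset.Icc 1 r, ENNReal.ofReal (lam i) • ν (a (i - 1))) μ ∧
      StochDom μ (∑ i ∈ Finset.Icc 1 r, ENNReal.ofReal (lam i) • ν (a i))) :
    ∀ A B : Finset (Fin d → ℤ), A.card = B.card →
      μ (cylEvent d A) = μ (cylEvent d B) := by
  intro A B hcard
  -- the indicator function of a cylinder event
  set X := ((Fin d → ℤ) → Bool)
  have hind : ∀ C : Finset (Fin d → ℤ), ∀ m : Measure X,
      ∫ x, (cylEvent d C).indicator (fun _ => (1:ℝ)) x ∂m = (m (cylEvent d C)).toReal := by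
    intro C m
    rw [integral_indicator_const (1:ℝ) (cylEvent_measurable d C)]
    simp
    rfl
  have hmeas : ∀ C : Finset (Fin d → ℤ),
      Measurable ((cylEvent d C).indicator (fun _ => (1:ℝ))) :=
    fun C => measurable_const.indicator (cylEvent_measurable d C)
  have hmono : ∀ C : Finset (Fin d → ℤ),
      Monotone ((cylEvent d C).indicator (fun _ => (1:ℝ))) := by
    intro C η η' hle
    by_cases h1 : η ∈ cylEvent d C
    · have h2 : η' ∈ cylEvent d C := fun x hx => Bool.le_iff_imp.mp (hle x) (h1 x hx)
      simp [Set.indicator_of_mem, h1, h2]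
    · rw [Set.indicator_of_notMem h1]
      exact Set.indicator_nonneg (fun _ _ => zero_le_one) _
  have hbdd : ∀ C : Finset (Fin d → ℤ),
      ∃ Cb : ℝ, ∀ x, |(cylEvent d C).indicator (fun _ => (1:ℝ)) x| ≤ Cb := by
    intro C
    refine ⟨1, fun x => ?_⟩
    unfold Set.indicator
    split_ifs <;> norm_num
  -- it suffices to prove equality of the real-valued measures
  rw [← ENNReal.toReal_eq_toReal_iff' (measure_ne_top μ _) (measure_ne_top μ _)]
  set n := A.card with hn
  -- key estimate: for every δ > 0 the difference is at most n * δ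
  have hkey : ∀ δ : ℝ, 0 < δ →
      |(μ (cylEvent d A)).toReal - (μ (cylEvent d B)).toReal| ≤ n * δ := by
    intro δ hδ
    obtain ⟨r, hr, a, lam, ha0, har, hainc, hmesh, hlam, hlamsum, hlow, hup⟩ := hsand δ hδ
    -- a is monotone on [0, r]
    have hamono : ∀ j, j ≤ r → ∀ i, i ≤ j → a i ≤ a j := by
      intro j hj
      induction j with
      | zero => intro i hi; rw [Nat.le_zero.mp hi]
      | succ k ih =>
        intro i hi
        rcases Nat.lt_or_ge i (k+1) with h | h
        · exact le_trans (ih (by omega) i (by omega)) (le_of_lt (hainc k (by omega)))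
        · have : i = k + 1 := by omega
          simp [this]
    have harange : ∀ i, i ≤ r → 0 ≤ a i ∧ a i ≤ 1 := by
      intro i hi
      constructor
      · have := hamono i hi 0 (Nat.zero_le i); rw [ha0] at this; exact this
      · have := hamono r le_rfl i hi; rw [har] at this; exact this
    -- value of the sandwiching measures on a cylinder event
    have hcomp : ∀ (g : ℕ → ℝ), (∀ i ∈ Finset.Icc 1 r, 0 ≤ g i ∧ g i ≤ 1) →
        ∀ C : Finset (Fin d → ℤ),
        (((∑ i ∈ Finset.Icc 1 r, ENNReal.ofReal (lam i) • ν (g i)) (cylEvent d C)).toReal)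
          = ∑ i ∈ Finset.Icc 1 r, lam i * (g i) ^ C.card := by
      intro g hg C
      rw [Measure.finset_sum_apply]
      rw [ENNReal.toReal_sum]
      · refine Finset.sum_congr rfl (fun i hi => ?_)
        rw [Measure.smul_apply, hνcyl (g i) (hg i hi).1 (hg i hi).2 C, smul_eq_mul,
          ENNReal.toReal_mul, ENNReal.toReal_ofReal (hlam i),
          ENNReal.toReal_ofReal (pow_nonneg (hg i hi).1 _)]
      · intro i hi
        rw [Measure.smul_apply, hνcyl (g i) (hg i hi).1 (hg i hi).2 C, smul_eq_mul]
        exact ENNReal.mul_ne_top ENNReal.ofReal_ne_top ENNReal.ofReal_ne_top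
    have hglo : ∀ i ∈ Finset.Icc 1 r, 0 ≤ a (i - 1) ∧ a (i - 1) ≤ 1 := by
      intro i hi; simp only [Finset.mem_Icc] at hi
      exact harange (i - 1) (by omega)
    have hghi : ∀ i ∈ Finset.Icc 1 r, 0 ≤ a i ∧ a i ≤ 1 := by
      intro i hi; simp only [Finset.mem_Icc] at hi
      exact harange i hi.2
    -- bounds for an arbitrary cylinder event of cardinality n
    have hbound : ∀ C : Finset (Fin d → ℤ), C.card = n →
        (∑ i ∈ Finset.Icc 1 r, lam i * (a (i-1)) ^ n) ≤ (μ (cylEvent d C)).toReal ∧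
        (μ (cylEvent d C)).toReal ≤ ∑ i ∈ Finset.Icc 1 r, lam i * (a i) ^ n := by
      intro C hC
      constructor
      · have := hlow _ (hmeas C) (hmono C) (hbdd C)
        rw [hind, hind, hcomp _ hglo, hC] at this
        exact this
      · have := hup _ (hmeas C) (hmono C) (hbdd C)
        rw [hind, hind, hcomp _ hghi, hC] at this
        exact this
    obtain ⟨hAlo, hAhi⟩ := hbound A rfl
    obtain ⟨hBlo, hBhi⟩ := hbound B hcard.symm
    -- the gap between the bounding sums is at most n * δ
    have hgap : (∑ i ∈ Finset.Icc 1 r, lam i * (a i) ^ n)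
        - (∑ i ∈ Finset.Icc 1 r, lam i * (a (i-1)) ^ n) ≤ n * δ := by
      rw [← Finset.sum_sub_distrib]
      calc ∑ i ∈ Finset.Icc 1 r, (lam i * a i ^ n - lam i * a (i-1) ^ n)
          ≤ ∑ i ∈ Finset.Icc 1 r, lam i * (n * δ) := by
            refine Finset.sum_le_sum (fun i hi => ?_)
            simp only [Finset.mem_Icc] at hi
            have h1 := harange (i-1) (by omega)
            have h2 := harange i hi.2
            have hle : a (i - 1) ≤ a i := hamono i hi.2 (i-1) (by omega)
            have hd : a i - a (i-1) < δ := hmesh i hi.1 hi.2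
            have hp := pow_diff_le n h1.1 hle h2.2
            rw [← mul_sub]
            refine mul_le_mul_of_nonneg_left ?_ (hlam i)
            calc a i ^ n - a (i-1) ^ n ≤ n * (a i - a (i-1)) := hp
              _ ≤ n * δ := by
                  exact mul_le_mul_of_nonneg_left hd.le (Nat.cast_nonneg n)
        _ = n * δ := by rw [← Finset.sum_mul, hlamsum, one_mul]
    rw [abs_sub_le_iff]
    constructor <;> linarith
  -- conclude: the difference is 0
  have habs : |(μ (cylEvent d A)).toReal - (μ (cylEvent d B)).toReal| ≤ 0 := by
    refine le_of_forall_pos_le_add (fun ε hε => ?_)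
    rw [zero_add]
    have hδ : (0:ℝ) < ε / (n + 1) := by positivity
    calc |(μ (cylEvent d A)).toReal - (μ (cylEvent d B)).toReal|
        ≤ n * (ε / (n + 1)) := hkey _ hδ
      _ ≤ ε := by
          rw [mul_div_assoc', div_le_iff₀ (by positivity)]
          nlinarith [Nat.cast_nonneg (α := ℝ) n, hε]
  have := abs_nonneg ((μ (cylEvent d A)).toReal - (μ (cylEvent d B)).toReal)
  have h0 : |(μ (cylEvent d A)).toReal - (μ (cylEvent d B)).toReal| = 0 := le_antisymm habs this
  rw [abs_eq_zero, sub_eq_zero] at h0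
  exact h0
end
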